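/- arXiv:2301.11533 — 5 statements merged into one kernel-verified Lean document; each statement's English description precedes it below -/
import Mathlib

section
/- For x = (x', x_n) in R^{n-1} × R, define |x|_e = (|x'|^2 + |x_n|^2)^{1/2} and |x|_h = (|x'|^2 + |x_n|)^{1/2}. Then the function x ↦ |x|_e^{-k} · |x|_h^{-l} is integrable on the unit ball {x : |x|_e ≤ 1} if and only if k + l < n + 1 and k + l/2 < n. -/
open MeasureTheory

open Set Metric
open scoped ENNReal

namespace ParabAux

lemma sqrt_rpow'' {A : ℝ} (hA : 0 ≤ A) (c : ℝ) : Real.sqrt A ^ c = A ^ (c / 2) := by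
  rw [Real.sqrt_eq_rpow, ← Real.rpow_mul hA]
  congr 1
  ring

lemma sq_rpow {r : ℝ} (hr : 0 ≤ r) (c : ℝ) : (r ^ 2) ^ c = r ^ (2 * c) := by
  rw [← Real.rpow_natCast r 2, ← Real.rpow_mul hr]
  norm_num

lemma lint_rpow_Ioo {a p : ℝ} (ha : 0 < a) :
    (∫⁻ r in Ioo (0:ℝ) a, ENNReal.ofReal (r ^ p)) < ⊤ ↔ -1 < p := by
  rw [← intervalIntegral.integrableOn_Ioo_rpow_iff ha]
  have hmeas : AEStronglyMeasurable (fun x : ℝ => x ^ p)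
      (volume.restrict (Ioo (0:ℝ) a)) := by fun_prop
  have hae : 0 ≤ᵐ[volume.restrict (Ioo (0:ℝ) a)] fun x : ℝ => x ^ p := by
    filter_upwards [ae_restrict_mem measurableSet_Ioo] with x hx
    exact Real.rpow_nonneg hx.1.le p
  constructor
  · intro h
    exact ⟨hmeas, (hasFiniteIntegral_iff_ofReal hae).2 h⟩
  · intro h
    exact (hasFiniteIntegral_iff_ofReal hae).1 h.2

lemma lintegral_even {ψ : ℝ → ℝ≥0∞} (hsym : ∀ t, ψ (-t) = ψ t) :
    ∫⁻ t, ψ t = 2 * ∫⁻ t in Ioi (0:ℝ), ψ t := by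
  have h1 : ∫⁻ t in Iio (0:ℝ), ψ t = ∫⁻ t in Ioi (0:ℝ), ψ t := by
    have h := (Measure.measurePreserving_neg (volume : Measure ℝ)).setLIntegral_comp_preimage_emb
      (Homeomorph.neg ℝ).measurableEmbedding ψ (Iio 0)
    have hpre : (Neg.neg : ℝ → ℝ) ⁻¹' (Iio 0) = Ioi 0 := by
      ext x; simp
    rw [hpre] at h
    rw [← h]
    exact setLIntegral_congr_fun measurableSet_Ioi
      (fun x _ => hsym x)
  have h2 : ∫⁻ t in Ici (0:ℝ), ψ t = ∫⁻ t in Ioi (0:ℝ), ψ t :=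
    (setLIntegral_congr Ioi_ae_eq_Ici).symm
  rw [← lintegral_add_compl ψ measurableSet_Ici, compl_Ici, h1, h2, two_mul]


lemma polar {m : ℕ} (hm : 0 < m) (H : ℝ → ℝ≥0∞) (hH : Measurable H) :
    ∫⁻ x : EuclideanSpace ℝ (Fin m), H ‖x‖ =
      (volume : Measure (EuclideanSpace ℝ (Fin m))).toSphere univ *
        ∫⁻ r in Ioi (0:ℝ), ENNReal.ofReal (r ^ (m - 1)) * H r := by
  set E := EuclideanSpace ℝ (Fin m) with hE
  haveI : Nontrivial E := by
    refine ⟨EuclideanSpace.single ⟨0, hm⟩ (1:ℝ), 0, fun h => ?_⟩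
    have : (EuclideanSpace.single ⟨0, hm⟩ (1:ℝ) : E) ⟨0, hm⟩ = (0 : E) ⟨0, hm⟩ := by rw [h]
    rw [EuclideanSpace.single_apply] at this
    simp only [if_pos rfl] at this
    exact one_ne_zero this
  have hdim : Module.finrank ℝ E = m := finrank_euclideanSpace_fin
  have hmeas2 : Measurable (fun p : sphere (0:E) 1 × Ioi (0:ℝ) => H ↑p.2) :=
    hH.comp (measurable_subtype_coe.comp measurable_snd)
  have h1 : ∫⁻ x : E, H ‖x‖ = ∫⁻ x in ({0}ᶜ : Set E), H ‖x‖ := by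
    rw [restrict_compl_singleton]
  have h2 : ∫⁻ x in ({0}ᶜ : Set E), H ‖x‖ =
      ∫⁻ x : ({0}ᶜ : Set E), H ‖(x : E)‖ ∂((volume : Measure E).comap (↑)) :=
    (lintegral_subtype_comap (measurableSet_singleton 0).compl _).symm
  have h3 : ∫⁻ x : ({0}ᶜ : Set E), H ‖(x : E)‖ ∂((volume : Measure E).comap (↑)) =
      ∫⁻ p : sphere (0:E) 1 × Ioi (0:ℝ), H ↑p.2
        ∂((volume : Measure E).toSphere.prod (.volumeIoiPow (Module.finrank ℝ E - 1))) := by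
    rw [← (Measure.measurePreserving_homeomorphUnitSphereProd
      (volume : Measure E)).lintegral_comp hmeas2]
    exact lintegral_congr fun x => by simp
  have h4 : ∫⁻ p : sphere (0:E) 1 × Ioi (0:ℝ), H ↑p.2
        ∂((volume : Measure E).toSphere.prod (.volumeIoiPow (Module.finrank ℝ E - 1))) =
      (volume : Measure E).toSphere univ *
        ∫⁻ r : Ioi (0:ℝ), H ↑r ∂(Measure.volumeIoiPow (m - 1)) := by
    rw [lintegral_prod _ hmeas2.aemeasurable, hdim]
    have heq : ∫⁻ (x : sphere (0:E) 1), (∫⁻ (y : Ioi (0:ℝ)), H ↑(x, y).2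
          ∂Measure.volumeIoiPow (m - 1)) ∂(volume : Measure E).toSphere =
        ∫⁻ (_x : sphere (0:E) 1), (∫⁻ (y : Ioi (0:ℝ)), H ↑y
          ∂Measure.volumeIoiPow (m - 1)) ∂(volume : Measure E).toSphere := rfl
    rw [heq, lintegral_const, mul_comm]
  have h5 : ∫⁻ r : Ioi (0:ℝ), H ↑r ∂(Measure.volumeIoiPow (m - 1)) =
      ∫⁻ r in Ioi (0:ℝ), ENNReal.ofReal (r ^ (m - 1)) * H r := by
    rw [Measure.volumeIoiPow,
      lintegral_withDensity_eq_lintegral_mul _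
        (show Measurable (fun r : Ioi (0:ℝ) => ENNReal.ofReal ((r:ℝ) ^ (m-1))) from
          (measurable_subtype_coe.pow_const (m-1)).ennreal_ofReal)
        (show Measurable (fun r : Ioi (0:ℝ) => H ↑r) from hH.comp measurable_subtype_coe)]
    exact lintegral_subtype_comap measurableSet_Ioi
      (fun x : ℝ => ENNReal.ofReal (x ^ (m - 1)) * H x)
  rw [h1, h2, h3, h4, h5]


lemma ge_bound {A x y a b : ℝ} (hx : 0 < x) (hy : 0 < y) (hxA : x ≤ A) (hyA : y ≤ A)
    (ha : 0 ≤ a) (hb : 0 ≤ b) : A ^ (-(a + b)) ≤ x ^ (-a) * y ^ (-b) := by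
  have hA : 0 < A := lt_of_lt_of_le hx hxA
  have h1 : x ^ a * y ^ b ≤ A ^ (a + b) := by
    rw [Real.rpow_add hA]
    exact mul_le_mul (Real.rpow_le_rpow hx.le hxA ha) (Real.rpow_le_rpow hy.le hyA hb)
      (Real.rpow_nonneg hy.le b) (Real.rpow_nonneg hA.le a)
  rw [Real.rpow_neg hA.le, Real.rpow_neg hx.le, Real.rpow_neg hy.le, ← mul_inv]
  exact inv_anti₀ (by positivity) h1

lemma uv_exists {M k l : ℝ} (hM : 1 ≤ M) (hk : 0 ≤ k) (hl : 0 ≤ l)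
    (h1 : k + l < M + 2) (h2 : k + l / 2 < M + 1) :
    ∃ u v : ℝ, 0 ≤ u ∧ u ≤ k ∧ 0 ≤ v ∧ v ≤ l ∧ u + v < M ∧ (k - u) + (l - v) / 2 < 1 := by
  set ε := min (min 1 (M + 1 - k - l / 2)) (M + 2 - (k + l)) / 2 with hεdef
  have hε0 : 0 < ε := by
    apply div_pos _ two_pos
    exact lt_min (lt_min one_pos (by linarith)) (by linarith)
  have hεa : ε ≤ 1 / 2 := by
    have h : min (min 1 (M + 1 - k - l / 2)) (M + 2 - (k + l)) ≤ 1 :=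
      le_trans (min_le_left _ _) (min_le_left _ _)
    rw [hεdef]; linarith
  have hεb : 2 * ε ≤ M + 1 - k - l / 2 := by
    have h : min (min 1 (M + 1 - k - l / 2)) (M + 2 - (k + l)) ≤ M + 1 - k - l / 2 :=
      le_trans (min_le_left _ _) (min_le_right _ _)
    rw [hεdef]; linarith
  have hεc : 2 * ε ≤ M + 2 - (k + l) := by
    have h := min_le_right (min 1 (M + 1 - k - l / 2)) (M + 2 - (k + l))
    rw [hεdef]; linarith
  set u := min k (M - ε) with hu
  set v := min l (M - ε - u) with hv
  have hu0 : 0 ≤ u := le_min hk (by linarith)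
  have huk : u ≤ k := min_le_left _ _
  have huM : u ≤ M - ε := min_le_right _ _
  have hv0 : 0 ≤ v := le_min hl (by linarith)
  have hvl : v ≤ l := min_le_left _ _
  have hvM : v ≤ M - ε - u := min_le_right _ _
  refine ⟨u, v, hu0, huk, hv0, hvl, by linarith, ?_⟩
  rcases le_total k (M - ε) with h | h
  · have hue : u = k := min_eq_left h
    rcases le_total l (M - ε - u) with h' | h'
    · have hve : v = l := min_eq_left h'
      rw [hue, hve]; linarith
    · have hve : v = M - ε - u := min_eq_right h'
      rw [hue] at hve; rw [hue, hve]; linarith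
  · have hue : u = M - ε := min_eq_right h
    have hve : v = 0 := le_antisymm (by rw [hue] at hvM; linarith) hv0
    rw [hue, hve]; linarith

/-- The 2D integrand. -/
noncomputable def Psi (k l : ℝ) : ℝ × ℝ → ℝ≥0∞ := fun p =>
  Set.indicator {q : ℝ × ℝ | q.1 ^ 2 + q.2 ^ 2 ≤ 1}
    (fun q => ENNReal.ofReal ((q.1 ^ 2 + q.2 ^ 2) ^ (-(k / 2)) * (q.1 ^ 2 + |q.2|) ^ (-(l / 2)))) p

lemma Psi_meas (k l : ℝ) : Measurable (Psi k l) := by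
  apply Measurable.indicator
  · fun_prop
  · exact measurableSet_le (by fun_prop) measurable_const

lemma Psi_symm (k l r t : ℝ) : Psi k l (r, -t) = Psi k l (r, t) := by
  simp [Psi, Set.indicator_apply, neg_sq, abs_neg]

lemma Psi_zero_of_one_le {k l r : ℝ} (hr : 1 ≤ r) {t : ℝ} (ht : 0 < t) :
    Psi k l (r, t) = 0 := by
  apply Set.indicator_of_notMem
  simp only [Set.mem_setOf_eq, not_le]
  nlinarith


lemma rpow_merge {r : ℝ} (hr : 0 < r) (a b c : ℝ) (h : a + b = c) :
    r ^ a * r ^ b = r ^ c := by rw [← Real.rpow_add hr, h]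

set_option maxHeartbeats 2000000 in
lemma core {k l M : ℝ} (hk : 0 ≤ k) (hl : 0 ≤ l) (hM : 1 ≤ M) :
    (∫⁻ r in Ioi (0:ℝ), ENNReal.ofReal (r ^ (M - 1)) * ∫⁻ t in Ioi (0:ℝ), Psi k l (r, t)) < ⊤ ↔
      (k + l < M + 2 ∧ k + l / 2 < M + 1) := by
  constructor
  · intro hJ
    constructor
    · -- k + l < M + 2
      by_contra hcon
      push_neg at hcon
      have hdiv : (∫⁻ r in Ioo (0:ℝ) (1/2), ENNReal.ofReal (r ^ (M + 1 - (k + l)))) = ⊤ := by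
        by_contra h
        have := (lint_rpow_Ioo (a := 1/2) (p := M + 1 - (k + l)) (by norm_num)).1
          (lt_top_iff_ne_top.2 h)
        linarith
      have step : ∀ r ∈ Ioo (0:ℝ) (1/2),
          ENNReal.ofReal ((2:ℝ) ^ (-((k + l) / 2))) * ENNReal.ofReal (r ^ (M + 1 - (k + l))) ≤
            ENNReal.ofReal (r ^ (M - 1)) * ∫⁻ t in Ioi (0:ℝ), Psi k l (r, t) := by
        intro r hr
        obtain ⟨hr0, hr2⟩ := hr
        have inner : ENNReal.ofReal ((2 * r ^ 2) ^ (-((k + l) / 2))) * ENNReal.ofReal (r ^ 2) ≤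
            ∫⁻ t in Ioi (0:ℝ), Psi k l (r, t) := by
          have hmono : (∫⁻ t in Ioo (0:ℝ) (r ^ 2), Psi k l (r, t)) ≤
              ∫⁻ t in Ioi (0:ℝ), Psi k l (r, t) :=
            lintegral_mono' (Measure.restrict_mono (fun t ht => ht.1) le_rfl) le_rfl
          refine le_trans ?_ hmono
          have hconst : (∫⁻ _t in Ioo (0:ℝ) (r ^ 2),
              ENNReal.ofReal ((2 * r ^ 2) ^ (-((k + l) / 2)))) =
              ENNReal.ofReal ((2 * r ^ 2) ^ (-((k + l) / 2))) * ENNReal.ofReal (r ^ 2) := by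
            rw [setLIntegral_const, Real.volume_Ioo, sub_zero]
          rw [← hconst]
          refine lintegral_mono_ae ?_
          filter_upwards [ae_restrict_mem measurableSet_Ioo] with t ht
          obtain ⟨ht0, htr⟩ := ht
          have hint1 : r ^ 2 < 1 / 4 := by nlinarith
          have hint2 : t * t < r ^ 2 * r ^ 2 := mul_lt_mul'' htr htr ht0.le ht0.le
          have hint3 : r ^ 2 * r ^ 2 ≤ r ^ 2 := by nlinarith
          have hmem : ((r, t) : ℝ × ℝ) ∈ {q : ℝ × ℝ | q.1 ^ 2 + q.2 ^ 2 ≤ 1} := by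
            simp only [Set.mem_setOf_eq]
            nlinarith
          have hPsi : Psi k l (r, t) =
              ENNReal.ofReal ((r ^ 2 + t ^ 2) ^ (-(k / 2)) * (r ^ 2 + |t|) ^ (-(l / 2))) :=
            Set.indicator_of_mem hmem _
          rw [hPsi]
          apply ENNReal.ofReal_le_ofReal
          have e1 : (2 * r ^ 2) ^ (-(k / 2)) ≤ (r ^ 2 + t ^ 2) ^ (-(k / 2)) :=
            Real.rpow_le_rpow_of_nonpos (by positivity) (by nlinarith)
              (by linarith)
          have e2 : (2 * r ^ 2) ^ (-(l / 2)) ≤ (r ^ 2 + |t|) ^ (-(l / 2)) := by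
            rw [abs_of_pos ht0]
            exact Real.rpow_le_rpow_of_nonpos (by positivity) (by nlinarith)
              (by linarith)
          calc (2 * r ^ 2) ^ (-((k + l) / 2))
              = (2 * r ^ 2) ^ (-(k / 2)) * (2 * r ^ 2) ^ (-(l / 2)) :=
                (rpow_merge (by positivity) _ _ _ (by ring)).symm
            _ ≤ (r ^ 2 + t ^ 2) ^ (-(k / 2)) * (r ^ 2 + |t|) ^ (-(l / 2)) :=
                mul_le_mul e1 e2 (Real.rpow_nonneg (by positivity) _)
                  (Real.rpow_nonneg (by positivity) _)
        have hre : (2:ℝ) ^ (-((k + l) / 2)) * r ^ (M + 1 - (k + l)) =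
            r ^ (M - 1) * ((2 * r ^ 2) ^ (-((k + l) / 2)) * r ^ 2) := by
          have e1 : (2 * r ^ 2 : ℝ) ^ (-((k + l) / 2)) =
              2 ^ (-((k + l) / 2)) * r ^ (2 * -((k + l) / 2)) := by
            rw [Real.mul_rpow (by norm_num) (by positivity), sq_rpow hr0.le]
          rw [e1, ← Real.rpow_natCast r 2]
          push_cast
          rw [show r ^ (M - 1) * (2 ^ (-((k + l) / 2)) * r ^ (2 * -((k + l) / 2)) * r ^ (2:ℝ)) =
              2 ^ (-((k + l) / 2)) * (r ^ (M - 1) * r ^ (2 * -((k + l) / 2)) * r ^ (2:ℝ)) from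
              by ring,
            rpow_merge hr0 (M - 1) (2 * -((k + l) / 2)) _ rfl, rpow_merge hr0 _ (2:ℝ) _ rfl]
          congr 1
          congr 1
          ring
        calc ENNReal.ofReal ((2:ℝ) ^ (-((k + l) / 2))) * ENNReal.ofReal (r ^ (M + 1 - (k + l)))
            = ENNReal.ofReal ((2:ℝ) ^ (-((k + l) / 2)) * r ^ (M + 1 - (k + l))) :=
              (ENNReal.ofReal_mul (by positivity)).symm
          _ = ENNReal.ofReal (r ^ (M - 1) * ((2 * r ^ 2) ^ (-((k + l) / 2)) * r ^ 2)) := by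
              rw [hre]
          _ = ENNReal.ofReal (r ^ (M - 1)) *
              (ENNReal.ofReal ((2 * r ^ 2) ^ (-((k + l) / 2))) * ENNReal.ofReal (r ^ 2)) := by
              rw [ENNReal.ofReal_mul (by positivity), ENNReal.ofReal_mul (by positivity)]
          _ ≤ ENNReal.ofReal (r ^ (M - 1)) * ∫⁻ t in Ioi (0:ℝ), Psi k l (r, t) :=
              mul_le_mul_right inner _
      have hchain : ENNReal.ofReal ((2:ℝ) ^ (-((k + l) / 2))) *
          (∫⁻ r in Ioo (0:ℝ) (1/2), ENNReal.ofReal (r ^ (M + 1 - (k + l)))) ≤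
          ∫⁻ r in Ioi (0:ℝ), ENNReal.ofReal (r ^ (M - 1)) *
            ∫⁻ t in Ioi (0:ℝ), Psi k l (r, t) := by
        rw [← lintegral_const_mul' _ _ ENNReal.ofReal_ne_top]
        refine le_trans (lintegral_mono_ae ?_)
          (lintegral_mono' (Measure.restrict_mono (fun x hx => hx.1) le_rfl) le_rfl)
        filter_upwards [ae_restrict_mem measurableSet_Ioo] with r hr
        exact step r hr
      rw [hdiv, ENNReal.mul_top (ENNReal.ofReal_pos.2 (by positivity)).ne'] at hchain
      exact hJ.ne (top_le_iff.1 hchain)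
    · -- k + l / 2 < M + 1
      by_contra hcon
      push_neg at hcon
      have hdiv : (∫⁻ r in Ioo (0:ℝ) (1/3), ENNReal.ofReal (r ^ (M - k - l / 2))) = ⊤ := by
        by_contra h
        have := (lint_rpow_Ioo (a := 1/3) (p := M - k - l / 2) (by norm_num)).1
          (lt_top_iff_ne_top.2 h)
        linarith
      have step : ∀ r ∈ Ioo (0:ℝ) (1/3),
          ENNReal.ofReal ((5:ℝ) ^ (-(k / 2)) * (3:ℝ) ^ (-(l / 2))) *
              ENNReal.ofReal (r ^ (M - k - l / 2)) ≤
            ENNReal.ofReal (r ^ (M - 1)) * ∫⁻ t in Ioi (0:ℝ), Psi k l (r, t) := by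
        intro r hr
        obtain ⟨hr0, hr3⟩ := hr
        have inner : ENNReal.ofReal ((5 * r ^ 2) ^ (-(k / 2)) * (3 * r) ^ (-(l / 2))) *
              ENNReal.ofReal r ≤
            ∫⁻ t in Ioi (0:ℝ), Psi k l (r, t) := by
          have hmono : (∫⁻ t in Ioo r (2 * r), Psi k l (r, t)) ≤
              ∫⁻ t in Ioi (0:ℝ), Psi k l (r, t) :=
            lintegral_mono' (Measure.restrict_mono (fun t ht => lt_trans hr0 ht.1) le_rfl) le_rfl
          refine le_trans ?_ hmono
          have hconst : (∫⁻ _t in Ioo r (2 * r),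
              ENNReal.ofReal ((5 * r ^ 2) ^ (-(k / 2)) * (3 * r) ^ (-(l / 2)))) =
              ENNReal.ofReal ((5 * r ^ 2) ^ (-(k / 2)) * (3 * r) ^ (-(l / 2))) *
                ENNReal.ofReal r := by
            rw [setLIntegral_const, Real.volume_Ioo, show 2 * r - r = r from by ring]
          rw [← hconst]
          refine lintegral_mono_ae ?_
          filter_upwards [ae_restrict_mem measurableSet_Ioo] with t ht
          obtain ⟨htr, ht2r⟩ := ht
          have ht0 : 0 < t := lt_trans hr0 htr
          have hint1 : t * t < (2 * r) * (2 * r) := mul_lt_mul'' ht2r ht2r ht0.le ht0.le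
          have hint2 : r * r < r := by nlinarith
          have hmem : ((r, t) : ℝ × ℝ) ∈ {q : ℝ × ℝ | q.1 ^ 2 + q.2 ^ 2 ≤ 1} := by
            simp only [Set.mem_setOf_eq]
            nlinarith
          have hPsi : Psi k l (r, t) =
              ENNReal.ofReal ((r ^ 2 + t ^ 2) ^ (-(k / 2)) * (r ^ 2 + |t|) ^ (-(l / 2))) :=
            Set.indicator_of_mem hmem _
          rw [hPsi]
          apply ENNReal.ofReal_le_ofReal
          have e1 : (5 * r ^ 2) ^ (-(k / 2)) ≤ (r ^ 2 + t ^ 2) ^ (-(k / 2)) :=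
            Real.rpow_le_rpow_of_nonpos (by positivity) (by nlinarith)
              (by linarith)
          have e2 : (3 * r) ^ (-(l / 2)) ≤ (r ^ 2 + |t|) ^ (-(l / 2)) := by
            rw [abs_of_pos ht0]
            exact Real.rpow_le_rpow_of_nonpos (by positivity) (by nlinarith)
              (by linarith)
          exact mul_le_mul e1 e2 (Real.rpow_nonneg (by positivity) _)
            (Real.rpow_nonneg (by positivity) _)
        have hre : (5:ℝ) ^ (-(k / 2)) * (3:ℝ) ^ (-(l / 2)) * r ^ (M - k - l / 2) =
            r ^ (M - 1) * ((5 * r ^ 2) ^ (-(k / 2)) * (3 * r) ^ (-(l / 2)) * r) := by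
          have e1 : (5 * r ^ 2 : ℝ) ^ (-(k / 2)) = 5 ^ (-(k / 2)) * r ^ (2 * -(k / 2)) := by
            rw [Real.mul_rpow (by norm_num) (by positivity), sq_rpow hr0.le]
          have e2 : (3 * r : ℝ) ^ (-(l / 2)) = 3 ^ (-(l / 2)) * r ^ (-(l / 2)) := by
            rw [Real.mul_rpow (by norm_num) hr0.le]
          rw [e1, e2,
            show r ^ (M - 1) * (5 ^ (-(k / 2)) * r ^ (2 * -(k / 2)) *
                (3 ^ (-(l / 2)) * r ^ (-(l / 2))) * r) =
              5 ^ (-(k / 2)) * 3 ^ (-(l / 2)) *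
                (r ^ (M - 1) * r ^ (2 * -(k / 2)) * r ^ (-(l / 2)) * r) from by ring,
            rpow_merge hr0 (M - 1) (2 * -(k / 2)) _ rfl,
            rpow_merge hr0 _ (-(l / 2)) _ rfl, ← Real.rpow_add_one hr0.ne']
          congr 1
          congr 1
          ring
        calc ENNReal.ofReal ((5:ℝ) ^ (-(k / 2)) * (3:ℝ) ^ (-(l / 2))) *
              ENNReal.ofReal (r ^ (M - k - l / 2))
            = ENNReal.ofReal ((5:ℝ) ^ (-(k / 2)) * (3:ℝ) ^ (-(l / 2)) *
                r ^ (M - k - l / 2)) := (ENNReal.ofReal_mul (by positivity)).symm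
          _ = ENNReal.ofReal (r ^ (M - 1) *
                ((5 * r ^ 2) ^ (-(k / 2)) * (3 * r) ^ (-(l / 2)) * r)) := by rw [hre]
          _ = ENNReal.ofReal (r ^ (M - 1)) *
              (ENNReal.ofReal ((5 * r ^ 2) ^ (-(k / 2)) * (3 * r) ^ (-(l / 2))) *
                ENNReal.ofReal r) := by
              rw [ENNReal.ofReal_mul (by positivity), ENNReal.ofReal_mul (by positivity)]
          _ ≤ ENNReal.ofReal (r ^ (M - 1)) * ∫⁻ t in Ioi (0:ℝ), Psi k l (r, t) :=
              mul_le_mul_right inner _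
      have hchain : ENNReal.ofReal ((5:ℝ) ^ (-(k / 2)) * (3:ℝ) ^ (-(l / 2))) *
          (∫⁻ r in Ioo (0:ℝ) (1/3), ENNReal.ofReal (r ^ (M - k - l / 2))) ≤
          ∫⁻ r in Ioi (0:ℝ), ENNReal.ofReal (r ^ (M - 1)) *
            ∫⁻ t in Ioi (0:ℝ), Psi k l (r, t) := by
        rw [← lintegral_const_mul' _ _ ENNReal.ofReal_ne_top]
        refine le_trans (lintegral_mono_ae ?_)
          (lintegral_mono' (Measure.restrict_mono (fun x hx => hx.1) le_rfl) le_rfl)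
        filter_upwards [ae_restrict_mem measurableSet_Ioo] with r hr
        exact step r hr
      rw [hdiv, ENNReal.mul_top (ENNReal.ofReal_pos.2 (by positivity)).ne'] at hchain
      exact hJ.ne (top_le_iff.1 hchain)
  · rintro ⟨h1, h2⟩
    obtain ⟨u, v, hu0, huk, hv0, hvl, huvM, hw⟩ := uv_exists hM hk hl h1 h2
    have hw0 : -1 < -((k - u) + (l - v) / 2) := by linarith
    have hp : -1 < M - 1 - (u + v) := by linarith
    set C := ∫⁻ t in Ioo (0:ℝ) 1, ENNReal.ofReal (t ^ (-((k - u) + (l - v) / 2))) with hCdef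
    have hCtop : C < ⊤ := (lint_rpow_Ioo one_pos).2 hw0
    have key : ∀ r ∈ Ioi (0:ℝ),
        ENNReal.ofReal (r ^ (M - 1)) * (∫⁻ t in Ioi (0:ℝ), Psi k l (r, t)) ≤
          (Ioo (0:ℝ) 1).indicator (fun r => ENNReal.ofReal (r ^ (M - 1 - (u + v)))) r * C := by
      intro r hr
      have hr0 : (0:ℝ) < r := hr
      rcases le_or_gt 1 r with hge | hlt
      · have hzero : (∫⁻ t in Ioi (0:ℝ), Psi k l (r, t)) = 0 := by
          have : (∫⁻ t in Ioi (0:ℝ), Psi k l (r, t)) = ∫⁻ _t in Ioi (0:ℝ), (0:ℝ≥0∞) :=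
            setLIntegral_congr_fun measurableSet_Ioi
              (fun t ht => Psi_zero_of_one_le hge ht)
          rw [this, lintegral_zero]
        rw [hzero, mul_zero]
        exact zero_le
      · have hinner : (∫⁻ t in Ioi (0:ℝ), Psi k l (r, t)) ≤
            ENNReal.ofReal (r ^ (-(u + v))) * C := by
          have hpt : ∀ t ∈ Ioi (0:ℝ), Psi k l (r, t) ≤
              (Ioo (0:ℝ) 1).indicator
                (fun t => ENNReal.ofReal (r ^ (-(u + v)) * t ^ (-((k - u) + (l - v) / 2)))) t := by
            intro t ht
            have ht0 : (0:ℝ) < t := ht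
            by_cases hin : ((r, t) : ℝ × ℝ) ∈ {q : ℝ × ℝ | q.1 ^ 2 + q.2 ^ 2 ≤ 1}
            · have hin' : r ^ 2 + t ^ 2 ≤ 1 := hin
              have ht1 : t < 1 := by nlinarith
              have hPsi : Psi k l (r, t) =
                  ENNReal.ofReal ((r ^ 2 + t ^ 2) ^ (-(k / 2)) * (r ^ 2 + |t|) ^ (-(l / 2))) :=
                Set.indicator_of_mem hin _
              rw [hPsi, Set.indicator_of_mem (show t ∈ Ioo (0:ℝ) 1 from ⟨ht0, ht1⟩)]
              apply ENNReal.ofReal_le_ofReal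
              have hb1 : (r ^ 2 + t ^ 2) ^ (-(k / 2)) ≤ r ^ (-u) * t ^ (-(k - u)) := by
                have hb := ge_bound (A := r ^ 2 + t ^ 2) (x := r ^ 2) (y := t ^ 2)
                  (by positivity) (by positivity) (by nlinarith) (by nlinarith)
                  (a := u / 2) (b := (k - u) / 2) (by linarith) (by linarith)
                rw [sq_rpow hr0.le, sq_rpow ht0.le] at hb
                calc (r ^ 2 + t ^ 2) ^ (-(k / 2))
                    = (r ^ 2 + t ^ 2) ^ (-(u / 2 + (k - u) / 2)) := by congr 1; ring
                  _ ≤ r ^ (2 * -(u / 2)) * t ^ (2 * -((k - u) / 2)) := hb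
                  _ = r ^ (-u) * t ^ (-(k - u)) := by
                      rw [show 2 * -(u / 2) = -u from by ring,
                        show 2 * -((k - u) / 2) = -(k - u) from by ring]
              have hb2 : (r ^ 2 + |t|) ^ (-(l / 2)) ≤ r ^ (-v) * t ^ (-((l - v) / 2)) := by
                rw [abs_of_pos ht0]
                have hb := ge_bound (A := r ^ 2 + t) (x := r ^ 2) (y := t)
                  (by positivity) ht0 (by nlinarith) (by nlinarith)
                  (a := v / 2) (b := (l - v) / 2) (by linarith) (by linarith)
                rw [sq_rpow hr0.le] at hb
                calc (r ^ 2 + t) ^ (-(l / 2))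
                    = (r ^ 2 + t) ^ (-(v / 2 + (l - v) / 2)) := by congr 1; ring
                  _ ≤ r ^ (2 * -(v / 2)) * t ^ (-((l - v) / 2)) := hb
                  _ = r ^ (-v) * t ^ (-((l - v) / 2)) := by
                      rw [show 2 * -(v / 2) = -v from by ring]
              calc (r ^ 2 + t ^ 2) ^ (-(k / 2)) * (r ^ 2 + |t|) ^ (-(l / 2))
                  ≤ (r ^ (-u) * t ^ (-(k - u))) * (r ^ (-v) * t ^ (-((l - v) / 2))) :=
                    mul_le_mul hb1 hb2 (Real.rpow_nonneg (by positivity) _) (by positivity)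
                _ = (r ^ (-u) * r ^ (-v)) * (t ^ (-(k - u)) * t ^ (-((l - v) / 2))) := by ring
                _ = r ^ (-(u + v)) * t ^ (-((k - u) + (l - v) / 2)) := by
                    rw [rpow_merge hr0 (-u) (-v) (-(u + v)) (by ring),
                      rpow_merge ht0 (-(k - u)) (-((l - v) / 2))
                        (-((k - u) + (l - v) / 2)) (by ring)]
            · rw [show Psi k l (r, t) = 0 from Set.indicator_of_notMem hin _]
              exact zero_le
          calc (∫⁻ t in Ioi (0:ℝ), Psi k l (r, t))
              ≤ ∫⁻ t in Ioi (0:ℝ), (Ioo (0:ℝ) 1).indicator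
                  (fun t => ENNReal.ofReal (r ^ (-(u + v)) *
                    t ^ (-((k - u) + (l - v) / 2)))) t :=
                lintegral_mono_ae (by
                  filter_upwards [ae_restrict_mem measurableSet_Ioi] with t ht
                  exact hpt t ht)
            _ = ∫⁻ t in Ioo (0:ℝ) 1,
                  ENNReal.ofReal (r ^ (-(u + v)) * t ^ (-((k - u) + (l - v) / 2))) := by
                rw [lintegral_indicator measurableSet_Ioo,
                  Measure.restrict_restrict measurableSet_Ioo,
                  inter_eq_left.2 (fun x hx => hx.1)]
            _ = ENNReal.ofReal (r ^ (-(u + v))) * C := by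
                rw [hCdef]
                simp_rw [ENNReal.ofReal_mul (Real.rpow_nonneg hr0.le _)]
                rw [lintegral_const_mul' _ _ ENNReal.ofReal_ne_top]
        rw [Set.indicator_of_mem (show r ∈ Ioo (0:ℝ) 1 from ⟨hr0, hlt⟩)]
        calc ENNReal.ofReal (r ^ (M - 1)) * (∫⁻ t in Ioi (0:ℝ), Psi k l (r, t))
            ≤ ENNReal.ofReal (r ^ (M - 1)) * (ENNReal.ofReal (r ^ (-(u + v))) * C) :=
              mul_le_mul_right hinner _
          _ = ENNReal.ofReal (r ^ (M - 1 - (u + v))) * C := by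
              rw [← mul_assoc, ← ENNReal.ofReal_mul (Real.rpow_nonneg hr0.le _),
                rpow_merge hr0 (M - 1) (-(u + v)) (M - 1 - (u + v)) (by ring)]
    calc (∫⁻ r in Ioi (0:ℝ), ENNReal.ofReal (r ^ (M - 1)) * ∫⁻ t in Ioi (0:ℝ), Psi k l (r, t))
        ≤ ∫⁻ r in Ioi (0:ℝ),
            (Ioo (0:ℝ) 1).indicator (fun r => ENNReal.ofReal (r ^ (M - 1 - (u + v)))) r * C :=
          lintegral_mono_ae (by
            filter_upwards [ae_restrict_mem measurableSet_Ioi] with r hr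
            exact key r hr)
      _ = (∫⁻ r in Ioo (0:ℝ) 1, ENNReal.ofReal (r ^ (M - 1 - (u + v)))) * C := by
          rw [lintegral_mul_const' C _ hCtop.ne, lintegral_indicator measurableSet_Ioo,
            Measure.restrict_restrict measurableSet_Ioo, inter_eq_left.2 (fun x hx => hx.1)]
      _ < ⊤ := ENNReal.mul_lt_top ((lint_rpow_Ioo one_pos).2 hp) hCtop

end ParabAux

noncomputable def normE {m : ℕ} (x : EuclideanSpace ℝ (Fin m) × ℝ) : ℝ :=
  Real.sqrt (‖x.1‖ ^ 2 + x.2 ^ 2)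

noncomputable def normH {m : ℕ} (x : EuclideanSpace ℝ (Fin m) × ℝ) : ℝ :=
  Real.sqrt (‖x.1‖ ^ 2 + |x.2|)

open ParabAux in
theorem stmt0 (n : ℕ) (hn : 2 ≤ n) (k l : ℝ) (hk : 0 ≤ k) (hl : 0 ≤ l) :
    IntegrableOn (fun x : EuclideanSpace ℝ (Fin (n - 1)) × ℝ =>
        normE x ^ (-k) * normH x ^ (-l))
      {x | normE x ≤ 1} volume ↔ (k + l < n + 1 ∧ k + l / 2 < n) := by
  set m := n - 1 with hmdef
  have hm1 : 1 ≤ m := by omega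
  have hm0 : 0 < m := hm1
  have hcast : (n:ℝ) = (m:ℝ) + 1 := by
    have : m + 1 = n := by omega
    rw [← this]
    push_cast
    ring
  set E := EuclideanSpace ℝ (Fin m) with hEdef
  have hnn : ∀ x : E × ℝ, 0 ≤ normE x ^ (-k) * normH x ^ (-l) := fun x =>
    mul_nonneg (Real.rpow_nonneg (Real.sqrt_nonneg _) _)
      (Real.rpow_nonneg (Real.sqrt_nonneg _) _)
  have hfm : Measurable (fun x : E × ℝ => normE x ^ (-k) * normH x ^ (-l)) := by
    unfold normE normH
    apply Measurable.mul
    · exact ((measurable_fst.norm.pow_const 2).add (measurable_snd.pow_const 2)).sqrt.pow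
        measurable_const
    · exact ((measurable_fst.norm.pow_const 2).add measurable_snd.abs).sqrt.pow
        measurable_const
  have hS : MeasurableSet {x : E × ℝ | normE x ≤ 1} := by
    apply measurableSet_le _ measurable_const
    unfold normE
    exact ((measurable_fst.norm.pow_const 2).add (measurable_snd.pow_const 2)).sqrt
  have hiff1 : IntegrableOn (fun x : E × ℝ => normE x ^ (-k) * normH x ^ (-l))
      {x | normE x ≤ 1} volume ↔
      (∫⁻ x in {x : E × ℝ | normE x ≤ 1},
        ENNReal.ofReal (normE x ^ (-k) * normH x ^ (-l))) < ⊤ := by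
    constructor
    · intro h
      exact (hasFiniteIntegral_iff_ofReal (ae_of_all _ hnn)).1 h.hasFiniteIntegral
    · intro h
      exact ⟨hfm.aestronglyMeasurable, (hasFiniteIntegral_iff_ofReal (ae_of_all _ hnn)).2 h⟩
  rw [hiff1]
  have hB : (∫⁻ x in {x : E × ℝ | normE x ≤ 1},
      ENNReal.ofReal (normE x ^ (-k) * normH x ^ (-l))) =
      ∫⁻ x : E × ℝ, Psi k l (‖x.1‖, x.2) := by
    rw [← lintegral_indicator hS]
    refine lintegral_congr fun x => ?_
    have hA : (0:ℝ) ≤ ‖x.1‖ ^ 2 + x.2 ^ 2 := by positivity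
    have hBn : (0:ℝ) ≤ ‖x.1‖ ^ 2 + |x.2| := by positivity
    have hval : ENNReal.ofReal (normE x ^ (-k) * normH x ^ (-l)) = ENNReal.ofReal
        ((‖x.1‖ ^ 2 + x.2 ^ 2) ^ (-(k / 2)) * (‖x.1‖ ^ 2 + |x.2|) ^ (-(l / 2))) := by
      unfold normE normH
      rw [sqrt_rpow'' hA, sqrt_rpow'' hBn, neg_div, neg_div]
    have hcond : (x ∈ {x : E × ℝ | normE x ≤ 1}) ↔
        ((‖x.1‖, x.2) ∈ {q : ℝ × ℝ | q.1 ^ 2 + q.2 ^ 2 ≤ 1}) := by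
      simp only [Set.mem_setOf_eq]
      unfold normE
      constructor
      · intro h
        nlinarith [Real.sq_sqrt hA, Real.sqrt_nonneg (‖x.1‖ ^ 2 + x.2 ^ 2)]
      · intro h
        calc Real.sqrt (‖x.1‖ ^ 2 + x.2 ^ 2) ≤ Real.sqrt 1 := Real.sqrt_le_sqrt h
          _ = 1 := Real.sqrt_one
    by_cases hx : x ∈ {x : E × ℝ | normE x ≤ 1}
    · rw [Set.indicator_of_mem hx, show Psi k l (‖x.1‖, x.2) = ENNReal.ofReal
          ((‖x.1‖ ^ 2 + x.2 ^ 2) ^ (-(k / 2)) * (‖x.1‖ ^ 2 + |x.2|) ^ (-(l / 2))) from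
          Set.indicator_of_mem (hcond.1 hx) _]
      exact hval
    · rw [Set.indicator_of_notMem hx, show Psi k l (‖x.1‖, x.2) = 0 from
        Set.indicator_of_notMem (fun h => hx (hcond.2 h)) _]
  rw [hB]
  have hΦcomp : Measurable (fun x : E × ℝ => Psi k l (‖x.1‖, x.2)) :=
    (Psi_meas k l).comp (measurable_fst.norm.prodMk measurable_snd)
  have hTon : (∫⁻ x : E × ℝ, Psi k l (‖x.1‖, x.2)) =
      ∫⁻ y : E, ∫⁻ t : ℝ, Psi k l (‖y‖, t) := by
    rw [Measure.volume_eq_prod, lintegral_prod _ hΦcomp.aemeasurable]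
  rw [hTon]
  have hHmeas : Measurable (fun r : ℝ => ∫⁻ t : ℝ, Psi k l (r, t)) :=
    (Psi_meas k l).lintegral_prod_right'
  have hpolar : (∫⁻ y : E, ∫⁻ t : ℝ, Psi k l (‖y‖, t)) =
      (volume : Measure E).toSphere univ *
        ∫⁻ r in Ioi (0:ℝ), ENNReal.ofReal (r ^ (m - 1)) * ∫⁻ t : ℝ, Psi k l (r, t) :=
    polar hm0 (fun r => ∫⁻ t : ℝ, Psi k l (r, t)) hHmeas
  rw [hpolar]
  have hc0 : (volume : Measure E).toSphere univ ≠ 0 := by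
    rw [Measure.toSphere_apply_univ]
    refine mul_ne_zero ?_ (measure_ball_pos _ _ one_pos).ne'
    rw [show Module.finrank ℝ E = m from finrank_euclideanSpace_fin]
    exact_mod_cast Nat.cast_ne_zero.2 hm0.ne'
  have hcT : (volume : Measure E).toSphere univ ≠ ⊤ := by
    rw [Measure.toSphere_apply_univ]
    exact ENNReal.mul_ne_top (ENNReal.natCast_ne_top _) measure_ball_lt_top.ne
  have hiff2 : ∀ X : ℝ≥0∞, ((volume : Measure E).toSphere univ * X < ⊤ ↔ X < ⊤) := by
    intro X
    constructor
    · intro h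
      rcases ENNReal.mul_lt_top_iff.1 h with ⟨_, hb⟩ | ha | hb
      · exact hb
      · exact absurd ha hc0
      · rw [hb]; simp
    · intro h
      exact ENNReal.mul_lt_top (lt_top_iff_ne_top.2 hcT) h
  rw [hiff2]
  have hHsplit : ∀ r ∈ Ioi (0:ℝ), ENNReal.ofReal (r ^ (m - 1)) * (∫⁻ t : ℝ, Psi k l (r, t)) =
      2 * (ENNReal.ofReal (r ^ ((m:ℝ) - 1)) * ∫⁻ t in Ioi (0:ℝ), Psi k l (r, t)) := by
    intro r hr
    have h2 : (∫⁻ t : ℝ, Psi k l (r, t)) = 2 * ∫⁻ t in Ioi (0:ℝ), Psi k l (r, t) :=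
      lintegral_even (fun t => Psi_symm k l r t)
    have h3 : ENNReal.ofReal (r ^ (m - 1)) = ENNReal.ofReal (r ^ ((m:ℝ) - 1)) := by
      rw [← Real.rpow_natCast r (m - 1)]
      congr 1
      congr 1
      push_cast [hm1]
      ring
    rw [h2, h3]
    ring
  rw [setLIntegral_congr_fun measurableSet_Ioi hHsplit,
    lintegral_const_mul' 2 _ (by norm_num)]
  have hiff3 : ∀ X : ℝ≥0∞, ((2:ℝ≥0∞) * X < ⊤ ↔ X < ⊤) := by
    intro X
    constructor
    · intro h
      rcases ENNReal.mul_lt_top_iff.1 h with ⟨_, hb⟩ | ha | hb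
      · exact hb
      · norm_num at ha
      · rw [hb]; simp
    · intro h
      exact ENNReal.mul_lt_top (by norm_num) h
  rw [hiff3]
  have hMcast : (1:ℝ) ≤ (m:ℝ) := by exact_mod_cast hm1
  rw [core hk hl hMcast, hcast]
  constructor
  · rintro ⟨a, b⟩
    exact ⟨by linarith, by linarith⟩
  · rintro ⟨a, b⟩
    exact ⟨by linarith, by linarith⟩
end

section
/- Let f : R^n → C be continuous with mean value zero on the non-isotropic unit sphere, satisfying |f(x−y) − f(x)| ≤ A |y|_h^α for |y|_h ≤ 1 (with 0 < α ≤ 1). Let K₀(x) = E_k(x', 0) H_l(x) where |E_k(x',0)| ≤ C|x'|^{-k}, |H_l(x)| ≤ C|x|_h^{-l}, k + l = n + 1, and l > 2 + α. Then for every 0 < ε < 1, |∫_{ε ≤ |y|_h ≤ 1} K₀(y)[f(x−y) − f(x)] dy| ≤ C' A, with C' independent of ε and x. -/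
open MeasureTheory Set

lemma aux_abs_rpow_int {q : ℝ} (hq : -1 < q) :
    MeasureTheory.IntegrableOn (fun t : ℝ => |t| ^ q) (Set.Icc (-1 : ℝ) 1) := by
  have h01 : IntegrableOn (fun t : ℝ => |t| ^ q) (Icc (0:ℝ) 1) := by
    have h := (intervalIntegrable_iff_integrableOn_Icc_of_le (by norm_num : (0:ℝ) ≤ 1)).1
      (intervalIntegral.intervalIntegrable_rpow' hq (a := 0) (b := 1))
    exact h.congr_fun (fun t ht => by rw [abs_of_nonneg ht.1]) measurableSet_Icc
  have hneg : IntegrableOn (fun t : ℝ => |t| ^ q) (Icc (-1:ℝ) 0) := by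
    have m : MeasurableEmbedding (fun x : ℝ => -x) := (Homeomorph.neg ℝ).measurableEmbedding
    rw [← Measure.map_neg_eq_self (volume : Measure ℝ), m.integrableOn_map_iff]
    simp_rw [Function.comp_def, abs_neg, neg_preimage, neg_Icc, neg_zero, neg_neg]
    exact h01
  have := hneg.union h01
  rwa [Icc_union_Icc_eq_Icc (by norm_num) (by norm_num)] at this

lemma aux_c_int {c β : ℝ} (hc : 0 < c) (hβ : β < -1) :
    MeasureTheory.Integrable (fun t : ℝ => (c + |t|) ^ β) := by
  have memb : MeasurableEmbedding (fun x : ℝ => c + x) :=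
    (Homeomorph.addLeft c).measurableEmbedding
  have hIoi0 : IntegrableOn (fun t : ℝ => (c + t) ^ β) (Ioi (0:ℝ)) := by
    have hpre : (fun x : ℝ => c + x) ⁻¹' (Ioi c) = Ioi 0 := by
      ext t; simp
    have h := (measurePreserving_add_left (volume : Measure ℝ) c).integrableOn_comp_preimage
      memb (f := fun t : ℝ => t ^ β) (s := Ioi c)
    rw [hpre] at h
    exact h.2 (integrableOn_Ioi_rpow_of_lt hβ hc)
  have hIoi : IntegrableOn (fun t : ℝ => (c + |t|) ^ β) (Ioi (0:ℝ)) :=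
    hIoi0.congr_fun (fun t ht => by rw [abs_of_pos ht]) measurableSet_Ioi
  have hIic : IntegrableOn (fun t : ℝ => (c + |t|) ^ β) (Iic (0:ℝ)) := by
    have m : MeasurableEmbedding (fun x : ℝ => -x) := (Homeomorph.neg ℝ).measurableEmbedding
    rw [← Measure.map_neg_eq_self (volume : Measure ℝ), m.integrableOn_map_iff]
    simp_rw [Function.comp_def, abs_neg, neg_preimage, neg_Iic, neg_zero]
    exact Iff.mpr integrableOn_Ici_iff_integrableOn_Ioi hIoi
  rw [← integrableOn_univ, ← Iic_union_Ioi (a := (0:ℝ))]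
  exact hIic.union hIoi

lemma aux_c_val {c β : ℝ} (hc : 0 < c) (hβ : β < -1) :
    ∫ t : ℝ, (c + |t|) ^ β = 2 * (-c ^ (β + 1) / (β + 1)) := by
  have memb : MeasurableEmbedding (fun x : ℝ => c + x) :=
    (Homeomorph.addLeft c).measurableEmbedding
  rw [integral_comp_abs (f := fun s => (c + s) ^ β)]
  have hpre : (fun x : ℝ => c + x) ⁻¹' (Ioi c) = Ioi 0 := by
    ext t; simp
  have h := (measurePreserving_add_left (volume : Measure ℝ) c).setIntegral_preimage_emb
    memb (fun t : ℝ => t ^ β) (Ioi c)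
  rw [hpre] at h
  rw [show (∫ t in Ioi (0:ℝ), (c + t) ^ β) = ∫ t in Ioi c, t ^ β from h,
    integral_Ioi_rpow_of_lt hβ hc]

lemma aux_ball_int {d : ℕ} (hd : 1 ≤ d) {p : ℝ} (hp : -(d:ℝ) < p) (hp0 : p ≤ 0) :
    MeasureTheory.Integrable
      ((Metric.closedBall (0 : EuclideanSpace ℝ (Fin d)) 1).indicator (fun y => ‖y‖ ^ p)) := by
  have hd0 : (0:ℝ) < d := by exact_mod_cast hd
  set q : ℝ := p / d with hq
  have hq1 : -1 < q := by
    rw [hq, lt_div_iff₀ hd0]; linarith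
  have hq0 : q ≤ 0 := by
    rw [hq, div_nonpos_iff]; right; exact ⟨hp0, hd0.le⟩
  have hone : Integrable ((Set.Icc (-1:ℝ) 1).indicator (fun t => |t| ^ q)) :=
    (aux_abs_rpow_int hq1).integrable_indicator measurableSet_Icc
  have hprod : Integrable (fun y : EuclideanSpace ℝ (Fin d) =>
      ∏ i, ((Set.Icc (-1:ℝ) 1).indicator (fun t => |t| ^ q)) (y i)) := by
    have hP : Integrable (fun x : Fin d → ℝ =>
        ∏ i, ((Set.Icc (-1:ℝ) 1).indicator (fun t => |t| ^ q)) (x i)) :=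
      Integrable.fintype_prod (𝕜 := ℝ) (fun _ => hone)
    have hmp := EuclideanSpace.volume_preserving_symm_measurableEquiv_toLp (Fin d)
    exact (hmp.integrable_comp_emb
      (MeasurableEquiv.toLp 2 (Fin d → ℝ)).symm.measurableEmbedding).2 hP
  have hnull : ∀ᵐ y : EuclideanSpace ℝ (Fin d), ∀ i, y i ≠ 0 := by
    rw [ae_all_iff]
    intro i
    refine ae_iff.2 ?_
    have hker : {y : EuclideanSpace ℝ (Fin d) | y i = 0}
        = ((LinearMap.ker ((EuclideanSpace.proj i : EuclideanSpace ℝ (Fin d) →L[ℝ] ℝ)).toLinearMap : Submodule ℝ _) :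
            Set (EuclideanSpace ℝ (Fin d))) := by
      ext y
      simp [LinearMap.mem_ker]
    have h0 : volume {y : EuclideanSpace ℝ (Fin d) | y i = 0} = 0 := by
      rw [hker]
      apply Measure.addHaar_submodule
      intro htop
      have h1 : EuclideanSpace.single i (1:ℝ) ∈
          LinearMap.ker ((EuclideanSpace.proj i : EuclideanSpace ℝ (Fin d) →L[ℝ] ℝ)).toLinearMap := by
        rw [htop]; trivial
      rw [LinearMap.mem_ker] at h1
      simp at h1
    simpa only [ne_eq, not_not] using h0
  refine hprod.mono' ?_ ?_
  · exact ((measurable_norm.pow measurable_const).indicator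
      measurableSet_closedBall).aestronglyMeasurable
  · filter_upwards [hnull] with y hy
    by_cases hball : y ∈ Metric.closedBall (0 : EuclideanSpace ℝ (Fin d)) 1
    · have hy1 : ‖y‖ ≤ 1 := mem_closedBall_zero_iff.1 hball
      have hcoord : ∀ i, |y i| ≤ ‖y‖ := by
        intro i
        have h1 : ‖y‖ = Real.sqrt (∑ j, ‖y j‖^2) := EuclideanSpace.norm_eq y
        have h2 : |y i| = Real.sqrt ((y i)^2) := (Real.sqrt_sq_eq_abs _).symm
        rw [h1, h2]
        apply Real.sqrt_le_sqrt
        have := Finset.single_le_sum (f := fun j => ‖y j‖^2)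
          (fun j _ => by positivity) (Finset.mem_univ i)
        simpa [Real.norm_eq_abs, sq_abs] using this
      have i0 : Fin d := ⟨0, hd⟩
      have hy0 : 0 < ‖y‖ := lt_of_lt_of_le (abs_pos.2 (hy i0)) (hcoord i0)
      rw [Set.indicator_of_mem hball]
      have hL : ‖‖y‖ ^ p‖ = ‖y‖ ^ p := by
        rw [Real.norm_eq_abs, abs_of_nonneg (Real.rpow_nonneg (norm_nonneg _) _)]
      rw [hL]
      have hfac : ∀ i, ((Set.Icc (-1:ℝ) 1).indicator (fun t => |t| ^ q)) (y i) = |y i| ^ q := by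
        intro i
        apply Set.indicator_of_mem
        exact Set.mem_Icc.2 (abs_le.1 ((hcoord i).trans hy1))
      rw [Finset.prod_congr rfl (fun i _ => hfac i)]
      have hprodpos : 0 < ∏ i, |y i| := Finset.prod_pos fun i _ => abs_pos.2 (hy i)
      have hprodle : (∏ i, |y i|) ≤ ‖y‖ ^ (d:ℝ) := by
        calc (∏ i, |y i|) ≤ ∏ _i : Fin d, ‖y‖ :=
              Finset.prod_le_prod (fun i _ => abs_nonneg _) (fun i _ => hcoord i)
          _ = ‖y‖ ^ (d:ℕ) := by rw [Finset.prod_const, Finset.card_univ, Fintype.card_fin]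
          _ = ‖y‖ ^ (d:ℝ) := (Real.rpow_natCast _ _).symm
      have hdq : (d:ℝ) * q = p := by rw [hq]; field_simp
      have h2 : ‖y‖ ^ p = (‖y‖ ^ (d:ℝ)) ^ q := by
        rw [← hdq]; exact Real.rpow_mul (norm_nonneg _) _ _
      rw [h2]
      have h3 : (‖y‖ ^ (d:ℝ)) ^ q ≤ (∏ i, |y i|) ^ q :=
        Real.rpow_le_rpow_of_nonpos hprodpos hprodle hq0
      refine h3.trans (le_of_eq ?_)
      rw [← Real.finset_prod_rpow Finset.univ _ (fun i _ => abs_nonneg _) q]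
    · rw [Set.indicator_of_notMem hball, norm_zero]
      exact Finset.prod_nonneg fun i _ =>
        Set.indicator_nonneg (fun t _ => Real.rpow_nonneg (abs_nonneg _) _) _

theorem stmt5 (n : ℕ) (hn : 2 ≤ n) (k l α A C : ℝ) (hkl : k + l = n + 1)
    (hα0 : 0 < α) (hα1 : α ≤ 1) (hl : 2 + α < l) (hA : 0 ≤ A) (hC : 0 ≤ C)
    (f : EuclideanSpace ℝ (Fin (n - 1)) × ℝ → ℂ) (hfc : Continuous f)
    (hf : ∀ x y, normH y ≤ 1 → ‖f (x - y) - f x‖ ≤ A * normH y ^ α)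
    (E : EuclideanSpace ℝ (Fin (n - 1)) → ℝ)
    (H : EuclideanSpace ℝ (Fin (n - 1)) × ℝ → ℝ)
    (hE : ∀ x' : EuclideanSpace ℝ (Fin (n - 1)), |E x'| ≤ C * ‖x'‖ ^ (-k))
    (hH : ∀ x, |H x| ≤ C * normH x ^ (-l)) :
    ∃ C' : ℝ, ∀ ε : ℝ, 0 < ε → ε < 1 → ∀ x,
      ‖∫ y in {y | ε ≤ normH y ∧ normH y ≤ 1},
          ((E y.1 * H y : ℝ) : ℂ) * (f (x - y) - f x)‖ ≤ C' * A := by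
  classical
  have hn1 : 1 ≤ n - 1 := by omega
  have hcast : ((n - 1 : ℕ) : ℝ) = (n : ℝ) - 1 := by
    have h1 : (1:ℕ) ≤ n := by omega
    push_cast [Nat.cast_sub h1]
    ring
  have hnR : (2:ℝ) ≤ (n:ℝ) := by exact_mod_cast hn
  set β : ℝ := (α - l) / 2 with hβdef
  have hβ : β < -1 := by rw [hβdef]; linarith
  set p : ℝ := -k + (2 * β + 2) with hpdef
  have hp : -((n - 1 : ℕ) : ℝ) < p := by
    rw [hcast, hpdef, hβdef]; linarith
  have hp0 : p ≤ 0 := by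
    rw [hpdef, hβdef]; linarith
  set c0 : ℝ := 2 * (-1 / (β + 1)) with hc0
  have hc0pos : 0 ≤ c0 := by
    have h1 : β + 1 < 0 := by linarith
    have h2 : 0 < (-1 : ℝ) / (β + 1) := by
      rw [div_pos_iff]; right; constructor <;> [norm_num; exact h1]
    rw [hc0]; positivity
  -- basic facts about normH
  have hnH0 : ∀ y : EuclideanSpace ℝ (Fin (n-1)) × ℝ, 0 ≤ normH y :=
    fun y => Real.sqrt_nonneg _
  have hnorm_sq : ∀ y : EuclideanSpace ℝ (Fin (n-1)) × ℝ, normH y ^ 2 = ‖y.1‖^2 + |y.2| :=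
    fun y => Real.sq_sqrt (by positivity)
  have hfst_le : ∀ y : EuclideanSpace ℝ (Fin (n-1)) × ℝ, ‖y.1‖ ≤ normH y := by
    intro y
    rw [show ‖y.1‖ = Real.sqrt (‖y.1‖^2) from (Real.sqrt_sq (norm_nonneg _)).symm]
    exact Real.sqrt_le_sqrt (le_add_of_nonneg_right (abs_nonneg _))
  have hkey : ∀ s : ℝ, 0 ≤ s → Real.sqrt s ^ (α - l) = s ^ β := by
    intro s hs
    rw [Real.sqrt_eq_rpow, ← Real.rpow_mul hs]
    congr 1
    rw [hβdef]; ring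
  have hcontH : Continuous (normH (m := n-1)) :=
    Real.continuous_sqrt.comp ((continuous_fst.norm.pow 2).add continuous_snd.abs)
  set T : Set (EuclideanSpace ℝ (Fin (n-1)) × ℝ) := {y | normH y ≤ 1} with hTdef
  have hTmeas : MeasurableSet T := measurableSet_le hcontH.measurable measurable_const
  set g : EuclideanSpace ℝ (Fin (n-1)) × ℝ → ℝ :=
    fun y => ‖y.1‖ ^ (-k) * (‖y.1‖^2 + |y.2|) ^ β with hgdef
  have hg0 : ∀ y, 0 ≤ g y := fun y =>
    mul_nonneg (Real.rpow_nonneg (norm_nonneg _) _) (Real.rpow_nonneg (by positivity) _)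
  have hgmeas : Measurable g :=
    ((measurable_fst.norm.pow measurable_const)).mul
      (((measurable_fst.norm.pow_const 2).add measurable_snd.abs).pow measurable_const)
  -- nontriviality and a.e. nonvanishing of the first coordinate
  have i0 : Fin (n-1) := ⟨0, hn1⟩
  haveI : Nontrivial (EuclideanSpace ℝ (Fin (n-1))) := by
    refine ⟨⟨EuclideanSpace.single i0 1, 0, fun h => ?_⟩⟩
    have := congrArg (· i0) h
    simp [EuclideanSpace.single_apply] at this
  have h0ae : ∀ᵐ y1 : EuclideanSpace ℝ (Fin (n-1)), y1 ≠ 0 := by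
    refine ae_iff.2 ?_
    simpa only [ne_eq, not_not, Set.setOf_eq_eq_singleton] using
      measure_singleton (0 : EuclideanSpace ℝ (Fin (n-1)))
  have hGmeas : AEStronglyMeasurable (T.indicator g)
      ((volume : Measure (EuclideanSpace ℝ (Fin (n-1)))).prod (volume : Measure ℝ)) := by
    rw [← Measure.volume_eq_prod]
    exact (hgmeas.indicator hTmeas).aestronglyMeasurable
  have hIntG : Integrable (T.indicator g) := by
    rw [Measure.volume_eq_prod]
    refine (integrable_prod_iff hGmeas).2 ⟨?_, ?_⟩
    · -- slices are integrable
      filter_upwards [h0ae] with y1 hy1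
      have ha : 0 < ‖y1‖ := norm_pos_iff.2 hy1
      have hfun : (fun t : ℝ => T.indicator g (y1, t)) =
          Set.indicator {t : ℝ | normH ((y1, t) : EuclideanSpace ℝ (Fin (n-1)) × ℝ) ≤ 1}
            (fun t => ‖y1‖ ^ (-k) * (‖y1‖^2 + |t|) ^ β) := by
        funext t
        rw [hTdef]
        simp only [Set.indicator_apply, Set.mem_setOf_eq, hgdef]
      rw [hfun]
      refine IntegrableOn.integrable_indicator ?_ ?_
      · have hsub : {t : ℝ | normH ((y1, t) : EuclideanSpace ℝ (Fin (n-1)) × ℝ) ≤ 1}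
            ⊆ Icc (-1:ℝ) 1 := by
          intro t ht
          simp only [mem_setOf_eq] at ht
          have h2 : ‖y1‖^2 + |t| ≤ 1 := by
            have hsq := hnorm_sq ((y1, t) : EuclideanSpace ℝ (Fin (n-1)) × ℝ)
            nlinarith [hnH0 ((y1, t) : EuclideanSpace ℝ (Fin (n-1)) × ℝ)]
          have h3 : |t| ≤ 1 := by nlinarith [sq_nonneg ‖y1‖]
          rw [mem_Icc]; exact abs_le.1 h3
        refine IntegrableOn.mono_set ?_ hsub
        apply Continuous.integrableOn_Icc
        refine continuous_const.mul ?_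
        refine Continuous.rpow_const (continuous_const.add continuous_abs) ?_
        intro t; left; positivity
      · exact measurableSet_le (hcontH.comp (Continuous.prodMk_right y1)).measurable measurable_const
    · -- the function y1 ↦ ∫ ‖slice‖ is integrable
      set Φ : EuclideanSpace ℝ (Fin (n-1)) → ℝ :=
        fun y1 => c0 * ((Metric.closedBall (0 : EuclideanSpace ℝ (Fin (n-1))) 1).indicator
          (fun y => ‖y‖ ^ p) y1) with hΦ
      have hΦint : Integrable Φ := (aux_ball_int hn1 hp hp0).const_mul c0
      have hΦ0 : ∀ y1, 0 ≤ Φ y1 := by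
        intro y1
        exact mul_nonneg hc0pos
          (Set.indicator_nonneg (fun y _ => Real.rpow_nonneg (norm_nonneg _) _) _)
      refine hΦint.mono' (hGmeas.norm.integral_prod_right') ?_
      filter_upwards [h0ae] with y1 hy1
      by_cases hin : ‖y1‖ ≤ 1
      · have ha : 0 < ‖y1‖ := norm_pos_iff.2 hy1
        have ha2 : 0 < ‖y1‖^2 := by positivity
        have hΦval : Φ y1 = c0 * ‖y1‖ ^ p := by
          simp only [hΦ]
          rw [Set.indicator_of_mem (mem_closedBall_zero_iff.2 hin)]
        have hdom : Integrable (fun t : ℝ => ‖y1‖ ^ (-k) * ((‖y1‖^2 + |t|) ^ β)) :=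
          (aux_c_int ha2 hβ).const_mul _
        have hle : ∫ t : ℝ, ‖T.indicator g (y1, t)‖
            ≤ ∫ t : ℝ, ‖y1‖ ^ (-k) * ((‖y1‖^2 + |t|) ^ β) := by
          apply integral_mono_of_nonneg
            (Filter.Eventually.of_forall fun t => norm_nonneg _) hdom
          apply Filter.Eventually.of_forall
          intro t
          show ‖T.indicator g (y1, t)‖ ≤ g ((y1, t))
          rw [Real.norm_eq_abs]
          by_cases hmem : ((y1,t) : EuclideanSpace ℝ (Fin (n-1)) × ℝ) ∈ T
          · rw [Set.indicator_of_mem hmem, abs_of_nonneg (hg0 _)]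
          · rw [Set.indicator_of_notMem hmem, abs_zero]; exact hg0 _
        have hval : ∫ t : ℝ, ‖y1‖ ^ (-k) * ((‖y1‖^2 + |t|) ^ β) = c0 * ‖y1‖ ^ p := by
          rw [integral_const_mul, aux_c_val ha2 hβ]
          have h2 : ((‖y1‖^2 : ℝ)) ^ (β+1) = ‖y1‖ ^ (2*(β+1)) := by
            rw [← Real.rpow_natCast ‖y1‖ 2, ← Real.rpow_mul (norm_nonneg _)]
            norm_num
          have h3 : ‖y1‖ ^ (-k) * ‖y1‖ ^ (2*(β+1)) = ‖y1‖ ^ p := by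
            rw [← Real.rpow_add ha]
            congr 1
            rw [hpdef]; ring
          rw [h2, hc0]
          rw [← h3]
          ring
        calc ‖∫ t : ℝ, ‖T.indicator g (y1, t)‖‖ = ∫ t : ℝ, ‖T.indicator g (y1, t)‖ := by
              rw [Real.norm_eq_abs, abs_of_nonneg (integral_nonneg fun t => norm_nonneg _)]
          _ ≤ c0 * ‖y1‖ ^ p := hval ▸ hle
          _ = Φ y1 := hΦval.symm
      · have hz : ∀ t : ℝ, T.indicator g (y1, t) = 0 := by
          intro t
          apply Set.indicator_of_notMem
          intro hmem
          exact hin (le_trans (hfst_le ((y1, t) : EuclideanSpace ℝ (Fin (n-1)) × ℝ)) hmem)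
        simp only [hz, norm_zero, integral_zero]
        exact hΦ0 y1
  have hIntOn : IntegrableOn g T := (integrable_indicator_iff hTmeas).1 hIntG
  refine ⟨C * C * ∫ y in T, g y, ?_⟩
  intro ε hε0 hε1 x
  set S : Set (EuclideanSpace ℝ (Fin (n-1)) × ℝ) := {y | ε ≤ normH y ∧ normH y ≤ 1} with hSdef
  have hSsub : S ⊆ T := fun y hy => hy.2
  have hSmeas : MeasurableSet S :=
    (measurableSet_le measurable_const hcontH.measurable).inter
      (measurableSet_le hcontH.measurable measurable_const)
  have hIntS : IntegrableOn (fun y => (C*C*A) * g y) S := (hIntOn.mono_set hSsub).const_mul _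
  calc ‖∫ y in S, ((E y.1 * H y : ℝ):ℂ) * (f (x - y) - f x)‖
      ≤ ∫ y in S, ‖((E y.1 * H y : ℝ):ℂ) * (f (x - y) - f x)‖ :=
        norm_integral_le_integral_norm _
    _ ≤ ∫ y in S, (C*C*A) * g y := by
        apply integral_mono_of_nonneg (Filter.Eventually.of_forall fun y => norm_nonneg _) hIntS
        filter_upwards [ae_restrict_mem hSmeas] with y hy
        obtain ⟨hyε, hy1⟩ := hy
        have hpos : 0 < normH y := lt_of_lt_of_le hε0 hyε
        have h1 : ‖((E y.1 * H y : ℝ):ℂ) * (f (x - y) - f x)‖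
            = |E y.1| * |H y| * ‖f (x - y) - f x‖ := by
          rw [norm_mul, Complex.norm_real, Real.norm_eq_abs, abs_mul]
        rw [h1]
        have hb1 : |E y.1| * |H y| ≤ (C * ‖y.1‖ ^ (-k)) * (C * normH y ^ (-l)) :=
          mul_le_mul (hE _) (hH _) (abs_nonneg _) (by positivity)
        have hb3 : |E y.1| * |H y| * ‖f (x - y) - f x‖
            ≤ (C * ‖y.1‖ ^ (-k)) * (C * normH y ^ (-l)) * (A * normH y ^ α) :=
          mul_le_mul hb1 (hf x y hy1) (norm_nonneg _) (by positivity)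
        refine le_trans hb3 (le_of_eq ?_)
        have hr : normH y ^ (-l) * normH y ^ α = (‖y.1‖^2 + |y.2|) ^ β := by
          rw [← Real.rpow_add hpos, show -l + α = α - l by ring]
          exact hkey (‖y.1‖^2 + |y.2|) (by positivity)
        calc (C * ‖y.1‖ ^ (-k)) * (C * normH y ^ (-l)) * (A * normH y ^ α)
            = C*C*A * (‖y.1‖ ^ (-k) * (normH y ^ (-l) * normH y ^ α)) := by ring
          _ = C*C*A * g y := by rw [hr]
    _ ≤ ∫ y in T, (C*C*A) * g y := by
        apply setIntegral_mono_set (hIntOn.const_mul _)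
          (Filter.Eventually.of_forall fun y => mul_nonneg (by positivity) (hg0 y))
          (HasSubset.Subset.eventuallyLE hSsub)
    _ = C * C * (∫ y in T, g y) * A := by rw [integral_const_mul]; ring
end

section
/- For k, l ≥ 0 with k + l = n + 1, l > 2, and 0 < α with l > 2 + α, the integral ∫_{|y|_h ≤ 1} |y'|^{-k} (|y'| + |y_n|^{1/2})^{-l} |y|_h^{α} dy is finite. -/
open MeasureTheory

open Set Real

lemma aux_one_dim {q : ℝ} (hq : q < 1) :
    IntegrableOn (fun s : ℝ => |s| ^ (-q)) (Icc (-1 : ℝ) 1) volume := by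
  have h1 : IntegrableOn (fun s : ℝ => |s| ^ (-q)) (Ioc (0:ℝ) 1) volume := by
    have h0 : IntegrableOn (fun s : ℝ => s ^ (-q)) (Ioc (0:ℝ) 1) volume := by
      rw [← intervalIntegrable_iff_integrableOn_Ioc_of_le zero_le_one]
      exact intervalIntegral.intervalIntegrable_rpow' (by linarith)
    exact h0.congr_fun (fun s hs => by rw [abs_of_pos hs.1]) measurableSet_Ioc
  have hpos : IntegrableOn (fun s : ℝ => |s| ^ (-q)) (Icc (0:ℝ) 1) volume := by
    rwa [IntegrableOn, Measure.restrict_congr_set Ioc_ae_eq_Icc] at h1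
  have hneg : IntegrableOn (fun s : ℝ => |s| ^ (-q)) (Ico (-1:ℝ) 0) volume := by
    have h2 := ((Measure.measurePreserving_neg (volume : Measure ℝ)).integrableOn_comp_preimage
      (Homeomorph.neg ℝ).measurableEmbedding
      (f := fun s : ℝ => |s| ^ (-q)) (s := Ioc (0:ℝ) 1)).mpr h1
    have : (Neg.neg ⁻¹' (Ioc (0:ℝ) 1) : Set ℝ) = Ico (-1:ℝ) 0 := by
      ext s
      simp only [mem_preimage, mem_Ioc, mem_Ico]
      constructor <;> intro h <;> constructor <;> linarith [h.1, h.2]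
    rw [this] at h2
    exact h2.congr_fun (fun s _ => by simp [Function.comp, abs_neg]) measurableSet_Ico
  exact (hneg.union hpos).mono_set (fun s hs => by
    rcases lt_or_ge s 0 with h | h
    · exact Or.inl ⟨hs.1, h⟩
    · exact Or.inr ⟨h, hs.2⟩)

lemma aux_pi {m : ℕ} (g : ℝ → ℝ) (hg : Integrable g volume) :
    Integrable (fun x : EuclideanSpace ℝ (Fin m) => ∏ i, g (x i)) volume := by
  have h1 : Integrable (fun y : Fin m → ℝ => ∏ i, g (y i)) volume :=
    Integrable.fintype_prod (fun _ => hg)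
  have h2 := (EuclideanSpace.volume_preserving_symm_measurableEquiv_toLp (Fin m)).symm
  rw [← h2.integrable_comp_emb (MeasurableEquiv.measurableEmbedding _)]
  exact h1

lemma aux_null {m : ℕ} (i : Fin m) :
    (volume : Measure (EuclideanSpace ℝ (Fin m))) {x | x i = 0} = 0 := by
  have h2 := EuclideanSpace.volume_preserving_symm_measurableEquiv_toLp (Fin m)
  have he : {x : EuclideanSpace ℝ (Fin m) | x i = 0}
      = (MeasurableEquiv.toLp 2 (Fin m → ℝ)).symm ⁻¹' {y : Fin m → ℝ | y i = 0} := rfl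
  have hs : MeasurableSet {y : Fin m → ℝ | y i = 0} :=
    (measurableSet_singleton (0:ℝ)).preimage (measurable_pi_apply i)
  have hv : (volume : Measure (Fin m → ℝ)) {y | y i = 0} = 0 := by
    rw [volume_pi]; exact Measure.pi_hyperplane _ i 0
  exact he ▸ ((h2.measure_preimage hs.nullMeasurableSet).trans hv)

lemma aux_coord {m : ℕ} (x : EuclideanSpace ℝ (Fin m)) (i : Fin m) : |x i| ≤ ‖x‖ := by
  rw [EuclideanSpace.norm_eq, ← Real.sqrt_sq_eq_abs]
  apply Real.sqrt_le_sqrt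
  have : ‖x i‖ ^ 2 = (x i) ^ 2 := by simp [sq_abs]
  rw [← this]
  exact Finset.single_le_sum (f := fun j => ‖x j‖ ^ 2) (fun j _ => sq_nonneg _) (Finset.mem_univ i)

set_option maxHeartbeats 1000000 in
theorem stmt6 (n : ℕ) (hn : 2 ≤ n) (k l α : ℝ) (hk : 0 ≤ k) (hl : 0 ≤ l)
    (hkl : k + l = n + 1) (hα : 0 < α) (hlα : 2 + α < l) :
    IntegrableOn (fun y : EuclideanSpace ℝ (Fin (n - 1)) × ℝ =>
        ‖y.1‖ ^ (-k) * (‖y.1‖ + |y.2| ^ ((1 : ℝ) / 2)) ^ (-l) * normH y ^ α)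
      {y | normH y ≤ 1} volume := by
  have hmcast : ((n - 1 : ℕ) : ℝ) = (n : ℝ) - 1 := by
    rw [Nat.cast_sub (by omega), Nat.cast_one]
  have hnR : (2:ℝ) ≤ (n:ℝ) := by exact_mod_cast hn
  set α' := min α 1 with hα'def
  have hα'pos : 0 < α' := lt_min hα one_pos
  have hα'le : α' ≤ α := min_le_left _ _
  have hα'1 : α' ≤ 1 := min_le_right _ _
  have hlα' : 2 + α' < l := lt_of_le_of_lt (by linarith) hlα
  have hn1R : (0:ℝ) < (n:ℝ) - 1 := by linarith
  set p := ((n:ℝ) - 1 - α'/2) / ((n:ℝ) - 1) with hpdef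
  have hp_pos : 0 < p := div_pos (by linarith) hn1R
  have hp1 : p < 1 := (div_lt_one hn1R).2 (by linarith)
  set b2 := 1 - α'/4 with hb2def
  have hb2pos : 0 < b2 := by rw [hb2def]; linarith
  have hb21 : b2 < 1 := by rw [hb2def]; linarith
  set a := l - 2 - α'/2 with hadef
  have ha_pos : 0 < a := by rw [hadef]; linarith
  have hka : k + a = p * ((n:ℝ) - 1) := by
    rw [hpdef, div_mul_cancel₀ _ hn1R.ne', hadef]; linarith
  set g₁ : ℝ → ℝ := Set.indicator (Icc (-1:ℝ) 1) (fun s => |s| ^ (-p)) with hg₁def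
  set g₂ : ℝ → ℝ := Set.indicator (Icc (-1:ℝ) 1) (fun t => |t| ^ (-b2)) with hg₂def
  have hg₁i : Integrable g₁ volume :=
    (integrable_indicator_iff measurableSet_Icc).2 (aux_one_dim hp1)
  have hg₂i : Integrable g₂ volume :=
    (integrable_indicator_iff measurableSet_Icc).2 (aux_one_dim hb21)
  set G : EuclideanSpace ℝ (Fin (n-1)) × ℝ → ℝ := fun y => (∏ i, g₁ (y.1 i)) * g₂ y.2
    with hGdef
  have hGint : Integrable G volume := by
    rw [hGdef, Measure.volume_eq_prod]
    exact (aux_pi g₁ hg₁i).mul_prod hg₂i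
  have hfm : Measurable (fun y : EuclideanSpace ℝ (Fin (n-1)) × ℝ =>
      ‖y.1‖ ^ (-k) * (‖y.1‖ + |y.2| ^ ((1:ℝ)/2)) ^ (-l) * normH y ^ α) := by
    unfold normH; fun_prop
  have hcont : Continuous (fun y : EuclideanSpace ℝ (Fin (n-1)) × ℝ => normH y) := by
    unfold normH; fun_prop
  have hSm : MeasurableSet {y : EuclideanSpace ℝ (Fin (n-1)) × ℝ | normH y ≤ 1} :=
    (isClosed_le hcont continuous_const).measurableSet
  have hae1 : ∀ᵐ y : EuclideanSpace ℝ (Fin (n-1)) × ℝ ∂volume, ∀ i, y.1 i ≠ 0 := by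
    rw [ae_all_iff]
    intro i
    rw [ae_iff]
    have he : {y : EuclideanSpace ℝ (Fin (n-1)) × ℝ | ¬ y.1 i ≠ 0}
        = {x : EuclideanSpace ℝ (Fin (n-1)) | x i = 0} ×ˢ (Set.univ : Set ℝ) := by
      ext y
      simp only [Set.mem_setOf_eq, not_not, Set.mem_prod, Set.mem_univ, and_true]
    rw [he, Measure.volume_eq_prod, Measure.prod_prod, aux_null i, zero_mul]
  have hae2 : ∀ᵐ y : EuclideanSpace ℝ (Fin (n-1)) × ℝ ∂volume, y.2 ≠ 0 := by
    rw [ae_iff]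
    have he : {y : EuclideanSpace ℝ (Fin (n-1)) × ℝ | ¬ y.2 ≠ 0}
        = (Set.univ : Set (EuclideanSpace ℝ (Fin (n-1)))) ×ˢ ({0} : Set ℝ) := by
      ext y
      simp only [Set.mem_setOf_eq, not_not, Set.mem_prod, Set.mem_univ, true_and,
        Set.mem_singleton_iff]
    rw [he, Measure.volume_eq_prod, Measure.prod_prod, Real.volume_singleton, mul_zero]
  apply Integrable.mono' hGint.integrableOn hfm.aestronglyMeasurable.restrict
  filter_upwards [ae_restrict_mem hSm, ae_restrict_of_ae hae1, ae_restrict_of_ae hae2]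
    with y hyS hy1 hy2
  have hyS' : normH y ≤ 1 := hyS
  have ht : 0 < |y.2| := abs_pos.2 hy2
  have hri : ∀ i, |y.1 i| ≤ ‖y.1‖ := fun i => aux_coord y.1 i
  have hr : 0 < ‖y.1‖ := lt_of_lt_of_le (abs_pos.2 (hy1 ⟨0, by omega⟩)) (hri _)
  have hSrt : ‖y.1‖^2 + |y.2| ≤ 1 := by
    have h0 : (0:ℝ) ≤ ‖y.1‖^2 + |y.2| := by positivity
    have h1 := Real.sq_sqrt h0
    have hh : Real.sqrt (‖y.1‖^2 + |y.2|) ≤ 1 := hyS'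
    nlinarith [Real.sqrt_nonneg (‖y.1‖^2 + |y.2|)]
  have hr1 : ‖y.1‖ ≤ 1 := by nlinarith
  have ht1 : |y.2| ≤ 1 := by nlinarith [sq_nonneg ‖y.1‖]
  have htp : 0 < |y.2| ^ ((1:ℝ)/2) := Real.rpow_pos_of_pos ht _
  have hts : (|y.2| ^ ((1:ℝ)/2)) ^ 2 = |y.2| := by
    rw [← Real.rpow_natCast (|y.2| ^ ((1:ℝ)/2)) 2, ← Real.rpow_mul (abs_nonneg _)]
    norm_num
  set u := ‖y.1‖ + |y.2| ^ ((1:ℝ)/2) with hudef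
  have hu : 0 < u := by rw [hudef]; positivity
  have hnHeq : normH y = Real.sqrt (‖y.1‖^2 + |y.2|) := rfl
  have hnH_pos : 0 < normH y := by rw [hnHeq]; exact Real.sqrt_pos.2 (by positivity)
  have hnH_le_u : normH y ≤ u := by
    rw [hnHeq]
    have hle : ‖y.1‖^2 + |y.2| ≤ u ^ 2 := by rw [hudef]; nlinarith [htp.le, hr.le]
    calc Real.sqrt (‖y.1‖^2 + |y.2|) ≤ Real.sqrt (u^2) := Real.sqrt_le_sqrt hle
    _ = u := Real.sqrt_sq hu.le
  have hmem2 : y.2 ∈ Icc (-1:ℝ) 1 := abs_le.1 ht1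
  have hmem1 : ∀ i, y.1 i ∈ Icc (-1:ℝ) 1 := fun i => abs_le.1 ((hri i).trans hr1)
  have hGy : G y = (∏ i, |y.1 i| ^ (-p)) * |y.2| ^ (-b2) := by
    rw [hGdef]
    simp only [hg₁def, hg₂def]
    rw [Set.indicator_of_mem hmem2]
    congr 1
    exact Finset.prod_congr rfl fun i _ => Set.indicator_of_mem (hmem1 i) _
  rw [hGy]
  have step1 : normH y ^ α ≤ normH y ^ α' := Real.rpow_le_rpow_of_exponent_ge hnH_pos hyS' hα'le
  have step2 : normH y ^ α' ≤ u ^ α' := Real.rpow_le_rpow hnH_pos.le hnH_le_u hα'pos.le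
  have step3 : u ^ (-l) * u ^ α' = u ^ (-a) * u ^ (-(2*b2)) := by
    rw [← Real.rpow_add hu, ← Real.rpow_add hu, hadef, hb2def]; ring_nf
  have step4 : u ^ (-a) ≤ ‖y.1‖ ^ (-a) :=
    Real.rpow_le_rpow_of_nonpos hr (by rw [hudef]; linarith [htp.le]) (by linarith)
  have step5 : u ^ (-(2*b2)) ≤ |y.2| ^ (-b2) := by
    have h5 : u ^ (-(2*b2)) ≤ (|y.2| ^ ((1:ℝ)/2)) ^ (-(2*b2)) :=
      Real.rpow_le_rpow_of_nonpos htp (by rw [hudef]; linarith [hr.le]) (by linarith)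
    have h6 : (|y.2| ^ ((1:ℝ)/2)) ^ (-(2*b2)) = |y.2| ^ (-b2) := by
      rw [← Real.rpow_mul (abs_nonneg _)]; ring_nf
    rw [h6] at h5; exact h5
  have step6 : ‖y.1‖ ^ (-k) * ‖y.1‖ ^ (-a) = ‖y.1‖ ^ (-(k+a)) := by
    rw [← Real.rpow_add hr]; ring_nf
  have step7 : ‖y.1‖ ^ (-(k+a)) ≤ ∏ i, |y.1 i| ^ (-p) := by
    have e1 : ‖y.1‖ ^ (-(k+a)) = (‖y.1‖ ^ (-p)) ^ ((n-1 : ℕ)) := by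
      rw [← Real.rpow_natCast (‖y.1‖ ^ (-p)) (n-1), ← Real.rpow_mul hr.le, hmcast, hka]
      ring_nf
    have e2 : (‖y.1‖ ^ (-p)) ^ ((n-1:ℕ)) = ∏ _i : Fin (n-1), ‖y.1‖ ^ (-p) := by
      rw [Finset.prod_const, Finset.card_univ, Fintype.card_fin]
    rw [e1, e2]
    exact Finset.prod_le_prod (fun i _ => Real.rpow_nonneg hr.le _)
      (fun i _ => Real.rpow_le_rpow_of_nonpos (abs_pos.2 (hy1 i)) (hri i)
        (neg_nonpos.2 hp_pos.le))
  have hLnn : 0 ≤ ‖y.1‖ ^ (-k) * u ^ (-l) * normH y ^ α := by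
    have := hnH_pos.le
    positivity
  calc ‖‖y.1‖ ^ (-k) * u ^ (-l) * normH y ^ α‖
      = ‖y.1‖ ^ (-k) * u ^ (-l) * normH y ^ α := by
        rw [Real.norm_eq_abs, abs_of_nonneg hLnn]
    _ ≤ ‖y.1‖ ^ (-k) * u ^ (-l) * u ^ α' := by
        apply mul_le_mul_of_nonneg_left (step1.trans step2)
        positivity
    _ = ‖y.1‖ ^ (-k) * (u ^ (-a) * u ^ (-(2*b2))) := by
        rw [mul_assoc, step3]
    _ ≤ ‖y.1‖ ^ (-k) * (‖y.1‖ ^ (-a) * |y.2| ^ (-b2)) := by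
        apply mul_le_mul_of_nonneg_left
          (mul_le_mul step4 step5 (Real.rpow_nonneg hu.le _) (Real.rpow_nonneg hr.le _))
        positivity
    _ = ‖y.1‖ ^ (-(k+a)) * |y.2| ^ (-b2) := by
        rw [← mul_assoc, step6]
    _ ≤ (∏ i, |y.1 i| ^ (-p)) * |y.2| ^ (-b2) :=
        mul_le_mul_of_nonneg_right step7 (Real.rpow_nonneg (abs_nonneg _) _)
end

section
/- Let E : R^n \ {0} → R be continuous and homogeneous of degree −k for isotropic dilations with k + l = n + 1 and l > 2, and suppose |E(x)| ≤ |x|_e^{-k}. Then the constants c_j = ∫_{1 ≤ |y|_h ≤ j} |y'|^{-k} |y|_h^{-l} dy satisfy |c_j| ≤ C j^{l−2} for all j ≥ 1, with C independent of j. -/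
open MeasureTheory

open Metric Set Module Real
open scoped ENNReal NNReal

lemma aux_ball {m : ℕ} {k : ℝ} (hk : 0 ≤ k) (hkm : k < m) {j : ℝ} (hj : 1 ≤ j) :
    ∫⁻ x in closedBall (0 : EuclideanSpace ℝ (Fin m)) j, ENNReal.ofReal (‖x‖ ^ (-k)) ≤
      ENNReal.ofReal ((1 + k / (m - k)) * j ^ ((m : ℝ) - k)) *
        volume (ball (0 : EuclideanSpace ℝ (Fin m)) 1) := by
  set E := EuclideanSpace ℝ (Fin m)
  have hj0 : (0:ℝ) < j := lt_of_lt_of_le one_pos hj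
  have hfr : finrank ℝ E = m := finrank_euclideanSpace_fin
  have hVne : volume (ball (0 : E) 1) ≠ ⊤ := measure_ball_lt_top.ne
  rcases eq_or_lt_of_le hk with hk0 | hkpos
  · -- k = 0
    rw [← hk0, sub_zero, zero_div, add_zero, one_mul]
    simp only [neg_zero, Real.rpow_zero, ENNReal.ofReal_one, lintegral_one,
      Measure.restrict_apply_univ]
    rw [Measure.addHaar_closedBall _ _ hj0.le, hfr, Real.rpow_natCast]
  · -- 0 < k
    have hkne : k ≠ 0 := hkpos.ne'
    set a : ℝ := j ^ (-k) with ha_def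
    have ha : 0 < a := Real.rpow_pos_of_pos hj0 _
    rw [lintegral_eq_lintegral_meas_le _ (Filter.Eventually.of_forall fun x => Real.rpow_nonneg (norm_nonneg x) _) ((by fun_prop : Measurable fun x : E => ‖x‖ ^ (-k)).aemeasurable)]
    set V := volume (ball (0 : E) 1)
    have hmeas_le : ∀ t ∈ Ioi (0:ℝ),
        (volume.restrict (closedBall (0:E) j)) {x : E | t ≤ ‖x‖ ^ (-k)} ≤
          ENNReal.ofReal (min j (t ^ (-k⁻¹)) ^ m) * V := by
      intro t ht
      rw [Measure.restrict_apply' measurableSet_closedBall]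
      have hsub : {x : E | t ≤ ‖x‖ ^ (-k)} ∩ closedBall 0 j ⊆
          closedBall (0:E) (min j (t ^ (-k⁻¹))) := by
        rintro x ⟨hx1, hx2⟩
        simp only [Set.mem_setOf_eq] at hx1
        rw [mem_closedBall_zero_iff] at hx2 ⊢
        refine le_min hx2 ?_
        have hxne : ‖x‖ ≠ 0 := by
          intro h
          rw [h, Real.zero_rpow (neg_ne_zero.mpr hkne)] at hx1
          exact absurd (lt_of_lt_of_le ht hx1) (lt_irrefl 0)
        have hxpos : 0 < ‖x‖ := lt_of_le_of_ne (norm_nonneg x) (Ne.symm hxne)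
        have h2 := Real.rpow_le_rpow_of_nonpos ht hx1 (neg_nonpos.mpr (inv_nonneg.mpr hk))
        rwa [← Real.rpow_mul (norm_nonneg x), neg_mul_neg, mul_inv_cancel₀ hkne,
          Real.rpow_one] at h2
      calc volume ({x : E | t ≤ ‖x‖ ^ (-k)} ∩ closedBall 0 j)
          ≤ volume (closedBall (0:E) (min j (t ^ (-k⁻¹)))) := measure_mono hsub
        _ = ENNReal.ofReal (min j (t ^ (-k⁻¹)) ^ finrank ℝ E) * V :=
            Measure.addHaar_closedBall _ _ (le_min hj0.le (Real.rpow_nonneg (le_of_lt ht) _))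
        _ = _ := by rw [hfr]
    calc ∫⁻ t in Ioi (0:ℝ), (volume.restrict (closedBall (0:E) j)) {x : E | t ≤ ‖x‖ ^ (-k)}
        ≤ ∫⁻ t in Ioi (0:ℝ), ENNReal.ofReal (min j (t ^ (-k⁻¹)) ^ m) * V :=
          setLIntegral_mono' measurableSet_Ioi hmeas_le
      _ = (∫⁻ t in Ioi (0:ℝ), ENNReal.ofReal (min j (t ^ (-k⁻¹)) ^ m)) * V :=
          lintegral_mul_const' _ _ hVne
      _ ≤ ENNReal.ofReal ((1 + k / (m - k)) * j ^ ((m : ℝ) - k)) * V := by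
          gcongr
          rw [← Ioc_union_Ioi_eq_Ioi ha.le,
            lintegral_union measurableSet_Ioi (Set.Ioc_disjoint_Ioi le_rfl)]
          have piece1 : ∫⁻ t in Ioc (0:ℝ) a, ENNReal.ofReal (min j (t ^ (-k⁻¹)) ^ m) ≤
              ENNReal.ofReal (j ^ ((m:ℝ) - k)) := by
            have : ∀ t ∈ Ioc (0:ℝ) a, ENNReal.ofReal (min j (t ^ (-k⁻¹)) ^ m) ≤
                ENNReal.ofReal (j ^ m) := by
              intro t ht
              exact ENNReal.ofReal_le_ofReal
                (pow_le_pow_left₀ (le_min hj0.le (Real.rpow_nonneg ht.1.le _)) (min_le_left _ _) _)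
            refine le_trans (setLIntegral_mono' measurableSet_Ioc this) ?_
            rw [setLIntegral_const, Real.volume_Ioc, sub_zero, ← ENNReal.ofReal_mul (by positivity)]
            apply ENNReal.ofReal_le_ofReal
            rw [← Real.rpow_natCast j m, ← Real.rpow_add hj0]
            have he : (m:ℝ) + -k = (m:ℝ) - k := by ring
            rw [he]
          have piece2 : ∫⁻ t in Ioi a, ENNReal.ofReal (min j (t ^ (-k⁻¹)) ^ m) ≤
              ENNReal.ofReal (j ^ ((m:ℝ) - k) * (k / ((m:ℝ) - k))) := by
            set q : ℝ := -k⁻¹ * m with hq_def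
            have hq : q < -1 := by
              rw [hq_def, neg_mul, neg_lt_neg_iff]
              rw [lt_inv_mul_iff₀ hkpos, mul_one]
              exact hkm
            have hstep : ∀ t ∈ Ioi a, ENNReal.ofReal (min j (t ^ (-k⁻¹)) ^ m) ≤
                ENNReal.ofReal (t ^ q) := by
              intro t ht
              have ht0 : 0 < t := ha.trans ht
              apply ENNReal.ofReal_le_ofReal
              calc min j (t ^ (-k⁻¹)) ^ m ≤ (t ^ (-k⁻¹)) ^ m :=
                    pow_le_pow_left₀ (le_min hj0.le (Real.rpow_nonneg ht0.le _))
                      (min_le_right _ _) _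
                _ = t ^ q := by
                    rw [← Real.rpow_natCast (t ^ (-k⁻¹)) m, ← Real.rpow_mul ht0.le]
            refine le_trans (setLIntegral_mono' measurableSet_Ioi hstep) ?_
            have hnn : 0 ≤ᵐ[volume.restrict (Ioi a)] fun t : ℝ => t ^ q := by
              filter_upwards [ae_restrict_mem measurableSet_Ioi] with t ht
              exact Real.rpow_nonneg (ha.trans ht).le _
            rw [← ofReal_integral_eq_lintegral_ofReal (integrableOn_Ioi_rpow_of_lt hq ha) hnn]
            apply ENNReal.ofReal_le_ofReal
            rw [integral_Ioi_rpow_of_lt hq ha]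
            apply le_of_eq
            have hq1 : q + 1 = (k - m) / k := by
              field_simp [hq_def]
              have hkk : k⁻¹ * k = 1 := inv_mul_cancel₀ hkne
              rw [hq_def]; linear_combination (-(m:ℝ)) * hkk
            rw [hq1, ha_def, ← Real.rpow_mul hj0.le]
            have h1 : -k * ((k - (m:ℝ)) / k) = (m:ℝ) - k := by field_simp; ring
            rw [h1]
            have hmk : (m:ℝ) - k ≠ 0 := sub_ne_zero.mpr (ne_of_gt hkm)
            have hkm' : k - (m:ℝ) ≠ 0 := sub_ne_zero.mpr (ne_of_lt hkm)
            field_simp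
            ring
          calc _ ≤ ENNReal.ofReal (j ^ ((m:ℝ) - k)) +
                ENNReal.ofReal (j ^ ((m:ℝ) - k) * (k / ((m:ℝ) - k))) := add_le_add piece1 piece2
            _ = ENNReal.ofReal ((1 + k / ((m:ℝ) - k)) * j ^ ((m:ℝ) - k)) := by
                rw [← ENNReal.ofReal_add (Real.rpow_nonneg hj0.le _)
                  (mul_nonneg (Real.rpow_nonneg hj0.le _)
                    (div_nonneg hk (sub_nonneg.mpr hkm.le)))]
                congr 1; ring

theorem stmt15 (n : ℕ) (hn : 2 ≤ n) (k l : ℝ) (hk : 0 ≤ k) (hkl : k + l = n + 1)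
    (hl : 2 < l)
    (E : EuclideanSpace ℝ (Fin (n - 1)) × ℝ → ℝ) (hEc : ContinuousOn E {x | x ≠ 0})
    (hhom : ∀ δ : ℝ, 0 < δ → ∀ x : EuclideanSpace ℝ (Fin (n - 1)) × ℝ, x ≠ 0 →
      E (δ • x) = δ ^ (-k) * E x)
    (hE : ∀ x, |E x| ≤ normE x ^ (-k)) :
    ∃ C : ℝ, 0 < C ∧ ∀ j : ℕ, 1 ≤ j →
      |∫ y in {y : EuclideanSpace ℝ (Fin (n - 1)) × ℝ | 1 ≤ normH y ∧ normH y ≤ (j : ℝ)},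
          ‖y.1‖ ^ (-k) * normH y ^ (-l)| ≤ C * (j : ℝ) ^ (l - 2) := by
  classical
  set M := EuclideanSpace ℝ (Fin (n - 1)) with hM
  have hmr : ((n - 1 : ℕ) : ℝ) = (n : ℝ) - 1 := by
    have : 1 ≤ n := by omega
    push_cast [Nat.cast_sub this]
    ring
  have hkm : k < ((n - 1 : ℕ) : ℝ) := by rw [hmr]; push_cast; linarith
  have hlk : ((n - 1 : ℕ) : ℝ) - k = l - 2 := by rw [hmr]; push_cast; linarith
  -- the 1D factor
  set B : ℝ≥0∞ := ∫⁻ t : ℝ, ENNReal.ofReal ((1 + |t|) ^ (-(l / 2))) with hB_def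
  have hB : B < ⊤ := by
    have h1 : ((finrank ℝ ℝ : ℕ) : ℝ) < l / 2 := by
      rw [finrank_self]; push_cast; linarith
    simpa [hB_def, Real.norm_eq_abs] using
      finite_integral_one_add_norm (μ := (volume : Measure ℝ)) h1
  set V : ℝ≥0∞ := volume (ball (0 : M) 1) with hV_def
  have hVne : V ≠ ⊤ := measure_ball_lt_top.ne
  set K : ℝ := 1 + k / (((n - 1 : ℕ) : ℝ) - k) with hK_def
  have hK0 : 0 ≤ K := by
    have h0 : 0 ≤ k / (((n - 1 : ℕ) : ℝ) - k) :=
      div_nonneg hk (sub_nonneg.mpr hkm.le)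
    rw [hK_def]
    linarith
  set D : ℝ≥0∞ := V * (ENNReal.ofReal (2 ^ (l / 2)) * B) with hD_def
  have hDne : D ≠ ⊤ := by
    refine ENNReal.mul_ne_top hVne (ENNReal.mul_ne_top ENNReal.ofReal_ne_top hB.ne)
  refine ⟨K * D.toReal + 1, by positivity, ?_⟩
  intro j hj
  have hj1 : (1 : ℝ) ≤ (j : ℝ) := by exact_mod_cast hj
  have hj0 : (0 : ℝ) < (j : ℝ) := lt_of_lt_of_le one_pos hj1
  set S : Set (M × ℝ) := {y | 1 ≤ normH y ∧ normH y ≤ (j : ℝ)} with hS_def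
  -- measurability
  have hnm : Measurable (fun y : M × ℝ => normH y) := by unfold normH; fun_prop
  have hSmeas : MeasurableSet S := by
    have : S = (fun y : M × ℝ => normH y) ⁻¹' (Set.Icc 1 (j : ℝ)) := rfl
    rw [this]
    exact hnm measurableSet_Icc
  have hfm : Measurable (fun y : M × ℝ => ‖y.1‖ ^ (-k) * normH y ^ (-l)) := by
    unfold normH; fun_prop
  have hf_nn : ∀ y : M × ℝ, 0 ≤ ‖y.1‖ ^ (-k) * normH y ^ (-l) := fun y =>
    mul_nonneg (Real.rpow_nonneg (norm_nonneg _) _)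
      (Real.rpow_nonneg (Real.sqrt_nonneg _) _)
  -- pointwise bounds on S
  have hnormH_sq : ∀ y : M × ℝ, normH y = Real.sqrt (‖y.1‖ ^ 2 + |y.2|) := fun y => rfl
  have hkey : ∀ y ∈ S, y.1 ∈ closedBall (0 : M) (j : ℝ) ∧
      normH y ^ (-l) ≤ 2 ^ (l / 2) * (1 + |y.2|) ^ (-(l / 2)) := by
    rintro y ⟨hy1, hy2⟩
    set s : ℝ := ‖y.1‖ ^ 2 + |y.2| with hs_def
    have hs0 : (0 : ℝ) ≤ s := by positivity
    have hs1 : (1 : ℝ) ≤ s := by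
      have := (Real.le_sqrt zero_le_one hs0).mp (by simpa [hnormH_sq] using hy1)
      simpa using this
    constructor
    · rw [mem_closedBall_zero_iff]
      calc ‖y.1‖ = Real.sqrt (‖y.1‖ ^ 2) := (Real.sqrt_sq (norm_nonneg _)).symm
        _ ≤ Real.sqrt s := Real.sqrt_le_sqrt (by simp [hs_def, abs_nonneg])
        _ ≤ (j : ℝ) := by simpa [hnormH_sq] using hy2
    · have hhalf : (1 + |y.2|) / 2 ≤ s := by
        have h2 : |y.2| ≤ s := by
          rw [hs_def]; nlinarith [sq_nonneg ‖y.1‖]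
        linarith
      have hbase : (0 : ℝ) < (1 + |y.2|) / 2 := by positivity
      calc normH y ^ (-l) = (s ^ ((1:ℝ)/2)) ^ (-l) := by
            rw [hnormH_sq, Real.sqrt_eq_rpow]
        _ = s ^ (-(l / 2)) := by
            rw [← Real.rpow_mul hs0]
            congr 1
            ring
        _ ≤ ((1 + |y.2|) / 2) ^ (-(l / 2)) :=
            Real.rpow_le_rpow_of_nonpos hbase hhalf (by linarith)
        _ = 2 ^ (l / 2) * (1 + |y.2|) ^ (-(l / 2)) := by
            rw [Real.div_rpow (by positivity) (by norm_num : (0:ℝ) ≤ 2),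
              Real.rpow_neg (by norm_num : (0:ℝ) ≤ 2), div_eq_mul_inv, inv_inv, mul_comm]
  -- the lintegral bound
  have hL : (∫⁻ y in S, ENNReal.ofReal (‖y.1‖ ^ (-k) * normH y ^ (-l))) ≤
      ENNReal.ofReal (K * (j : ℝ) ^ (l - 2)) * D := by
    calc (∫⁻ y in S, ENNReal.ofReal (‖y.1‖ ^ (-k) * normH y ^ (-l)))
        ≤ ∫⁻ y in S, ENNReal.ofReal (‖y.1‖ ^ (-k)) *
            ENNReal.ofReal (2 ^ (l / 2) * (1 + |y.2|) ^ (-(l / 2))) := by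
          refine setLIntegral_mono' hSmeas fun y hy => ?_
          rw [ENNReal.ofReal_mul (Real.rpow_nonneg (norm_nonneg _) _)]
          exact mul_le_mul_right (ENNReal.ofReal_le_ofReal ((hkey y hy).2)) _
      _ ≤ ∫⁻ y in (closedBall (0 : M) (j : ℝ)) ×ˢ (Set.univ : Set ℝ),
            ENNReal.ofReal (‖y.1‖ ^ (-k)) *
            ENNReal.ofReal (2 ^ (l / 2) * (1 + |y.2|) ^ (-(l / 2))) := by
          refine lintegral_mono_set fun y hy => ?_
          exact ⟨(hkey y hy).1, Set.mem_univ _⟩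
      _ = (∫⁻ x in closedBall (0 : M) (j : ℝ), ENNReal.ofReal (‖x‖ ^ (-k))) *
          (∫⁻ t : ℝ, ENNReal.ofReal (2 ^ (l / 2) * (1 + |t|) ^ (-(l / 2)))) := by
          rw [Measure.volume_eq_prod, ← Measure.prod_restrict, Measure.restrict_univ]
          exact lintegral_prod_mul
            ((by fun_prop : Measurable fun x : M => ENNReal.ofReal (‖x‖ ^ (-k))).aemeasurable)
            ((by fun_prop : Measurable fun t : ℝ =>
              ENNReal.ofReal (2 ^ (l / 2) * (1 + |t|) ^ (-(l / 2)))).aemeasurable)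
      _ ≤ ENNReal.ofReal (K * (j : ℝ) ^ ((((n-1:ℕ)) : ℝ) - k)) * V *
          (ENNReal.ofReal (2 ^ (l / 2)) * B) := by
          have h2 : (∫⁻ t : ℝ, ENNReal.ofReal (2 ^ (l / 2) * (1 + |t|) ^ (-(l / 2)))) =
              ENNReal.ofReal (2 ^ (l / 2)) * B := by
            rw [hB_def, ← lintegral_const_mul' _ _ ENNReal.ofReal_ne_top]
            congr 1
            ext t
            rw [← ENNReal.ofReal_mul (by positivity)]
          rw [h2]
          exact mul_le_mul' (aux_ball hk hkm hj1) le_rfl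
      _ = ENNReal.ofReal (K * (j : ℝ) ^ (l - 2)) * D := by
          rw [hlk, hD_def, mul_assoc]
  -- conclude
  have hRHSne : ENNReal.ofReal (K * (j : ℝ) ^ (l - 2)) * D ≠ ⊤ :=
    ENNReal.mul_ne_top ENNReal.ofReal_ne_top hDne
  have hfin : (∫⁻ y in S, ENNReal.ofReal (‖y.1‖ ^ (-k) * normH y ^ (-l))) < ⊤ :=
    lt_of_le_of_lt hL (lt_top_iff_ne_top.mpr hRHSne)
  have hint : Integrable (fun y : M × ℝ => ‖y.1‖ ^ (-k) * normH y ^ (-l))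
      (volume.restrict S) := by
    refine ⟨hfm.aestronglyMeasurable, ?_⟩
    rw [hasFiniteIntegral_iff_ofReal (Filter.Eventually.of_forall hf_nn)]
    exact hfin
  have heq : (∫ y in S, ‖y.1‖ ^ (-k) * normH y ^ (-l)) =
      (∫⁻ y in S, ENNReal.ofReal (‖y.1‖ ^ (-k) * normH y ^ (-l))).toReal := by
    rw [integral_eq_lintegral_of_nonneg_ae (Filter.Eventually.of_forall hf_nn)
      hfm.aestronglyMeasurable]
  rw [heq, abs_of_nonneg ENNReal.toReal_nonneg]
  calc (∫⁻ y in S, ENNReal.ofReal (‖y.1‖ ^ (-k) * normH y ^ (-l))).toReal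
      ≤ (ENNReal.ofReal (K * (j : ℝ) ^ (l - 2)) * D).toReal :=
        ENNReal.toReal_mono hRHSne hL
    _ = K * (j : ℝ) ^ (l - 2) * D.toReal := by
        rw [ENNReal.toReal_mul, ENNReal.toReal_ofReal (by positivity)]
    _ ≤ (K * D.toReal + 1) * (j : ℝ) ^ (l - 2) := by
        have h1 : (0:ℝ) ≤ (j : ℝ) ^ (l - 2) := Real.rpow_nonneg hj0.le _
        nlinarith [ENNReal.toReal_nonneg (a := D)]
end

section
/- For 0 < α < ε < 1 and n ≥ 1, the double integral ∫₀^∞ ∫_{R^n} (t'/t)^α · min(t/t', t'/t)^ε · (max(t,t'))^ε / (max(t,t') + |x|)^{n+ε} dx (dt/t) is bounded by a constant C independent of t' > 0. -/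
open MeasureTheory

/-- Scaling of the inner integral over `EuclideanSpace ℝ (Fin n)`. -/
lemma aux_scale (n : ℕ) (p b t' : ℝ) (hb : 0 < b) (ht' : 0 < t') :
    (∫ x : EuclideanSpace ℝ (Fin n), ((t' * b + ‖x‖) ^ p)⁻¹)
      = (t' ^ p)⁻¹ * t' ^ (n : ℝ) * ∫ x : EuclideanSpace ℝ (Fin n), ((b + ‖x‖) ^ p)⁻¹ := by
  have h := MeasureTheory.Measure.integral_comp_smul (μ := (volume : Measure (EuclideanSpace ℝ (Fin n))))
      (fun x : EuclideanSpace ℝ (Fin n) => ((b + ‖x‖) ^ p)⁻¹) t'⁻¹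
  have hpt : ∀ x : EuclideanSpace ℝ (Fin n),
      ((b + ‖t'⁻¹ • x‖) ^ p)⁻¹ = t' ^ p * ((t' * b + ‖x‖) ^ p)⁻¹ := by
    intro x
    have hnx : ‖t'⁻¹ • x‖ = t'⁻¹ * ‖x‖ := by
      rw [norm_smul, Real.norm_eq_abs, abs_of_pos (inv_pos.mpr ht')]
    have hx : (0 : ℝ) ≤ ‖x‖ := norm_nonneg x
    have hrw : b + t'⁻¹ * ‖x‖ = t'⁻¹ * (t' * b + ‖x‖) := by
      field_simp
    rw [hnx, hrw, Real.mul_rpow (inv_pos.mpr ht').le (by positivity),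
      mul_inv, Real.inv_rpow ht'.le, inv_inv]
  simp only [hpt] at h
  rw [integral_const_mul] at h
  have hfr : (Module.finrank ℝ (EuclideanSpace ℝ (Fin n))) = n := finrank_euclideanSpace_fin
  rw [hfr] at h
  have habs : |(((t'⁻¹) ^ n)⁻¹ : ℝ)| = t' ^ (n : ℝ) := by
    rw [← inv_pow, inv_inv, abs_of_pos (pow_pos ht' n), Real.rpow_natCast]
  rw [habs, smul_eq_mul] at h
  have h2 : (∫ x : EuclideanSpace ℝ (Fin n), ((t' * b + ‖x‖) ^ p)⁻¹)
      = (t' ^ p)⁻¹ * (t' ^ p * ∫ x : EuclideanSpace ℝ (Fin n), ((t' * b + ‖x‖) ^ p)⁻¹) := by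
    rw [← mul_assoc, inv_mul_cancel₀ (ne_of_gt (Real.rpow_pos_of_pos ht' p)), one_mul]
  rw [h2, h, mul_assoc]

theorem stmt19 (n : ℕ) (hn : 1 ≤ n) (α ε : ℝ) (hα : 0 < α) (hαε : α < ε) (hε : ε < 1) :
    ∃ C : ℝ, 0 < C ∧ ∀ t' : ℝ, 0 < t' →
      (∫ t in Set.Ioi (0 : ℝ),
        (∫ x : EuclideanSpace ℝ (Fin n),
          (t' / t) ^ α * (min (t / t') (t' / t)) ^ ε * (max t t') ^ ε /
            ((max t t' + ‖x‖) ^ ((n : ℝ) + ε))) / t) ≤ C := by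
  have hε0 : (0 : ℝ) < ε := hα.trans hαε
  set p : ℝ := (n : ℝ) + ε with hp
  set I1 : ℝ := ∫ t in Set.Ioi (0 : ℝ),
      (∫ x : EuclideanSpace ℝ (Fin n),
        ((1 : ℝ) / t) ^ α * (min (t / (1 : ℝ)) ((1 : ℝ) / t)) ^ ε * (max t (1 : ℝ)) ^ ε /
          ((max t (1 : ℝ) + ‖x‖) ^ p)) / t with hI1
  refine ⟨|I1| + 1, by positivity, fun t' ht' => ?_⟩
  have key : (∫ t in Set.Ioi (0 : ℝ),
      (∫ x : EuclideanSpace ℝ (Fin n),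
        (t' / t) ^ α * (min (t / t') (t' / t)) ^ ε * (max t t') ^ ε /
          ((max t t' + ‖x‖) ^ p)) / t) = I1 := by
    set F : ℝ → ℝ := fun t =>
      (∫ x : EuclideanSpace ℝ (Fin n),
        (t' / t) ^ α * (min (t / t') (t' / t)) ^ ε * (max t t') ^ ε /
          ((max t t' + ‖x‖) ^ p)) / t with hF
    have hsub := integral_comp_mul_left_Ioi F 0 ht'
    rw [mul_zero, smul_eq_mul] at hsub
    have h2 : (∫ t in Set.Ioi (0 : ℝ), F t) = t' * ∫ s in Set.Ioi (0 : ℝ), F (t' * s) := by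
      rw [hsub, ← mul_assoc, mul_inv_cancel₀ ht'.ne', one_mul]
    have h3 : Set.EqOn (fun s => F (t' * s))
        (fun s => ((∫ x : EuclideanSpace ℝ (Fin n),
          ((1 : ℝ) / s) ^ α * (min (s / (1 : ℝ)) ((1 : ℝ) / s)) ^ ε * (max s (1 : ℝ)) ^ ε /
            ((max s (1 : ℝ) + ‖x‖) ^ p)) / s) / t') (Set.Ioi 0) := by
      intro s hs
      have hs0 : (0 : ℝ) < s := hs
      have hb : (0 : ℝ) < max s 1 := lt_max_of_lt_right one_pos
      have e1 : t' / (t' * s) = 1 / s := by field_simp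
      have e2 : t' * s / t' = s / 1 := by field_simp
      have e3 : max (t' * s) t' = t' * max s 1 := by
        rw [mul_max_of_nonneg _ _ ht'.le, mul_one]
      simp only [hF, e1, e2, e3]
      have hden : ∀ x : EuclideanSpace ℝ (Fin n),
          (1 / s) ^ α * (min (s / 1) (1 / s)) ^ ε * (t' * max s 1) ^ ε /
              ((t' * max s 1 + ‖x‖) ^ p)
            = ((1 / s) ^ α * (min (s / 1) (1 / s)) ^ ε * (t' * max s 1) ^ ε) *
              (((t' * max s 1 + ‖x‖) ^ p)⁻¹) := fun x => div_eq_mul_inv _ _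
      have hden1 : ∀ x : EuclideanSpace ℝ (Fin n),
          (1 / s) ^ α * (min (s / 1) (1 / s)) ^ ε * (max s 1) ^ ε /
              ((max s 1 + ‖x‖) ^ p)
            = ((1 / s) ^ α * (min (s / 1) (1 / s)) ^ ε * (max s 1) ^ ε) *
              (((max s 1 + ‖x‖) ^ p)⁻¹) := fun x => div_eq_mul_inv _ _
      simp only [hden, hden1]
      rw [integral_const_mul, integral_const_mul, aux_scale n p (max s 1) t' hb ht']
      have hpow : (t' * max s 1) ^ ε * ((t' ^ p)⁻¹ * t' ^ (n : ℝ)) = (max s 1) ^ ε := by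
        rw [Real.mul_rpow ht'.le hb.le, ← Real.rpow_neg ht'.le p, mul_comm (t' ^ ε), mul_assoc,
          ← Real.rpow_add ht', ← Real.rpow_add ht',
          show ε + (-p + (n : ℝ)) = 0 by rw [hp]; ring, Real.rpow_zero, mul_one]
      set J : ℝ := ∫ x : EuclideanSpace ℝ (Fin n), ((max s 1 + ‖x‖) ^ p)⁻¹ with hJ
      have hnum : (1 / s) ^ α * (min (s / 1) (1 / s)) ^ ε * (t' * max s 1) ^ ε *
            ((t' ^ p)⁻¹ * t' ^ (n : ℝ) * J)
          = (1 / s) ^ α * (min (s / 1) (1 / s)) ^ ε * (max s 1) ^ ε * J := by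
        linear_combination ((1 / s) ^ α * (min (s / 1) (1 / s)) ^ ε * J) * hpow
      rw [hnum, div_div, mul_comm t' s]
    rw [h2, setIntegral_congr_fun measurableSet_Ioi h3, integral_div, hI1,
      mul_div_assoc', mul_comm, mul_div_assoc, div_self ht'.ne', mul_one]
  rw [key]
  nlinarith [le_abs_self I1, abs_nonneg I1]
end
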